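/- arXiv:1304.0230 — 10 statements merged into one kernel-verified Lean document; each statement's English description precedes it below -/
import Mathlib

section
/- For a commutative field K, elements a, b, x, y ∈ K and c, z ∈ K \ {0}, let M_{a,b,c} denote the 4×4 matrix over K with rows (1,0,0,0), (a,c,0,0), (b,3ac,c²,0), (ab−a³,bc,ac²,c³). Then M_{a,b,c}·M_{x,y,z} = M_{a+cx, b+3acx+c²y, cz}, the matrix M_{a,b,c} is invertible, and its inverse equals M_{−ac⁻¹, (3a²−b)c⁻², c⁻¹}. In particular, the set G(F) = {M_{a,b,c} : a,b ∈ K, c ∈ K \ {0}} is a subgroup of GL₄(K). -/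
/-- The matrix `M_{a,b,c}` from the paper. -/
def cayleyM {K : Type*} [Field K] (a b c : K) : Matrix (Fin 4) (Fin 4) K :=
  !![1, 0, 0, 0;
     a, c, 0, 0;
     b, 3*a*c, c^2, 0;
     a*b - a^3, b*c, a*c^2, c^3]

lemma cayleyM_mul {K : Type*} [Field K] (a b c x y z : K) :
    cayleyM a b c * cayleyM x y z
      = cayleyM (a + c*x) (b + 3*a*c*x + c^2*y) (c*z) := by
  ext i j
  fin_cases i <;> fin_cases j <;>
    simp [cayleyM, Matrix.mul_apply, Fin.sum_univ_four] <;> ring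

lemma cayleyM_one {K : Type*} [Field K] : (cayleyM 0 0 1 : Matrix (Fin 4) (Fin 4) K) = 1 := by
  ext i j
  fin_cases i <;> fin_cases j <;>
    simp [cayleyM, Matrix.one_apply, Matrix.vecHead, Matrix.vecTail]

lemma cayleyM_mul_inv {K : Type*} [Field K] (a b c : K) (hc : c ≠ 0) :
    cayleyM a b c * cayleyM (-(a*c⁻¹)) ((3*a^2 - b)*(c⁻¹)^2) c⁻¹ = 1 := by
  rw [cayleyM_mul]
  have h1 : a + c * -(a * c⁻¹) = 0 := by field_simp; ring
  have h2 : b + 3*a*c*(-(a*c⁻¹)) + c^2*((3*a^2 - b)*(c⁻¹)^2) = 0 := by field_simp; ring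
  rw [h1, h2, mul_inv_cancel₀ hc, cayleyM_one]

lemma cayleyM_inv_mul {K : Type*} [Field K] (a b c : K) (hc : c ≠ 0) :
    cayleyM (-(a*c⁻¹)) ((3*a^2 - b)*(c⁻¹)^2) c⁻¹ * cayleyM a b c = 1 := by
  rw [cayleyM_mul]
  have h1 : -(a*c⁻¹) + c⁻¹ * a = 0 := by field_simp; ring
  have h2 : (3*a^2 - b)*(c⁻¹)^2 + 3*(-(a*c⁻¹))*c⁻¹*a + (c⁻¹)^2*b = 0 := by
    field_simp; ring
  rw [h1, h2, inv_mul_cancel₀ hc, cayleyM_one]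

def cayleyG (K : Type*) [Field K] : Subgroup (GL (Fin 4) K) where
  carrier := {u | ∃ a' b' c' : K, c' ≠ 0 ∧ (u : Matrix (Fin 4) (Fin 4) K) = cayleyM a' b' c'}
  one_mem' := ⟨0, 0, 1, one_ne_zero, by simp [cayleyM_one]⟩
  mul_mem' := by
    rintro u v ⟨a1, b1, c1, hc1, hu⟩ ⟨a2, b2, c2, hc2, hv⟩
    exact ⟨a1 + c1*a2, b1 + 3*a1*c1*a2 + c1^2*b2, c1*c2, mul_ne_zero hc1 hc2, by
      simp [Units.val_mul, hu, hv, cayleyM_mul]⟩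
  inv_mem' := by
    rintro u ⟨a1, b1, c1, hc1, hu⟩
    refine ⟨-(a1*c1⁻¹), (3*a1^2 - b1)*(c1⁻¹)^2, c1⁻¹, inv_ne_zero hc1, ?_⟩
    have h : (↑u⁻¹ : Matrix (Fin 4) (Fin 4) K) = (↑u : Matrix (Fin 4) (Fin 4) K)⁻¹ :=
      Matrix.coe_units_inv u
    rw [h, hu]
    exact Matrix.inv_eq_right_inv (cayleyM_mul_inv a1 b1 c1 hc1)

theorem stmt_0 {K : Type*} [Field K] (a b x y c z : K) (hc : c ≠ 0) (hz : z ≠ 0) :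
    cayleyM a b c * cayleyM x y z
      = cayleyM (a + c*x) (b + 3*a*c*x + c^2*y) (c*z) ∧
    IsUnit (cayleyM a b c) ∧
    (cayleyM a b c)⁻¹ = cayleyM (-(a*c⁻¹)) ((3*a^2 - b)*(c⁻¹)^2) c⁻¹ ∧
    ∃ G : Subgroup (GL (Fin 4) K),
      ∀ u : GL (Fin 4) K,
        u ∈ G ↔ ∃ a' b' c' : K, c' ≠ 0 ∧ (u : Matrix (Fin 4) (Fin 4) K) = cayleyM a' b' c' := by
  refine ⟨cayleyM_mul a b c x y z, ?_, ?_, ?_⟩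
  · exact (Matrix.isUnit_iff_isUnit_det _).2 (Matrix.isUnit_det_of_right_inverse (cayleyM_mul_inv a b c hc))
  · exact Matrix.inv_eq_right_inv (cayleyM_mul_inv a b c hc)
  · refine ⟨cayleyG K, fun u => ?_⟩
    exact Iff.rfl
end

section
/- Let K be a commutative field and define f : K⁴ → K by f(p₀,p₁,p₂,p₃) = p₀p₁p₂ − p₁³ − p₀²p₃. For all a, b ∈ K, c ∈ K \ {0} and every column vector p ∈ K⁴, one has f(M_{a,b,c}·p) = c³·f(p). Consequently, for every nonzero p ∈ K⁴, f(p) = 0 if and only if f(M_{a,b,c}·p) = 0; i.e., each matrix M_{a,b,c} induces a projective collineation of ℙ₃(K) leaving the Cayley surface F = {Kp : p ∈ K⁴ \ {0}, f(p) = 0} invariant. -/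
open Matrix

/-- The cubic form defining the Cayley surface. -/
def cayleyF {K : Type*} [Field K] (p : Fin 4 → K) : K :=
  p 0 * p 1 * p 2 - (p 1)^3 - (p 0)^2 * p 3

theorem stmt_1 {K : Type*} [Field K] (a b c : K) (hc : c ≠ 0) :
    (∀ p : Fin 4 → K, cayleyF (cayleyM a b c *ᵥ p) = c^3 * cayleyF p) ∧
    (∀ p : Fin 4 → K, p ≠ 0 → (cayleyF p = 0 ↔ cayleyF (cayleyM a b c *ᵥ p) = 0)) := by
  have key : ∀ p : Fin 4 → K, cayleyF (cayleyM a b c *ᵥ p) = c^3 * cayleyF p := by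
    intro p
    simp [cayleyF, cayleyM, mulVec, dotProduct, Fin.sum_univ_four]
    ring
  refine ⟨key, fun p _ => ?_⟩
  rw [key]
  constructor
  · intro h; rw [h, mul_zero]
  · intro h
    rcases mul_eq_zero.mp h with h | h
    · exact absurd h (pow_ne_zero 3 hc)
    · exact h
end

section
/- Let K be a commutative field and let P(u₁,u₂) = (1, u₁, u₂, u₁u₂ − u₁³) ∈ K⁴ for (u₁,u₂) ∈ K². Then for all (u₁,u₂), (v₁,v₂) ∈ K² there exists exactly one pair (a,b) ∈ K² such that M_{a,b,1}·P(u₁,u₂) = P(v₁,v₂); namely the commutative group {M_{a,b,1} : a,b ∈ K} acts regularly on the set of affine points of the Cayley surface, and in particular the group G(F) = {M_{a,b,c} : a,b ∈ K, c ∈ K \ {0}} acts transitively on F \ g∞. -/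
open Matrix

/-- The parametrization of the affine part of the Cayley surface. -/
def cayleyP {K : Type*} [Field K] (u₁ u₂ : K) : Fin 4 → K :=
  ![1, u₁, u₂, u₁*u₂ - u₁^3]

theorem stmt_3 {K : Type*} [Field K] (u₁ u₂ v₁ v₂ : K) :
    (∃! ab : K × K, cayleyM ab.1 ab.2 (1 : K) *ᵥ cayleyP u₁ u₂ = cayleyP v₁ v₂) ∧
    (∃ a b c : K, c ≠ 0 ∧ cayleyM a b c *ᵥ cayleyP u₁ u₂ = cayleyP v₁ v₂) := by
  have key : cayleyM (v₁ - u₁) (v₂ - u₂ - 3*(v₁ - u₁)*u₁) (1 : K) *ᵥ cayleyP u₁ u₂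
      = cayleyP v₁ v₂ := by
    funext i
    fin_cases i <;>
      simp [cayleyM, cayleyP, mulVec, dotProduct, Fin.sum_univ_four] <;> ring
  refine ⟨⟨(v₁ - u₁, v₂ - u₂ - 3*(v₁ - u₁)*u₁), key, ?_⟩,
    v₁ - u₁, v₂ - u₂ - 3*(v₁ - u₁)*u₁, 1, one_ne_zero, key⟩
  rintro ⟨a, b⟩ h
  have h1 := congrFun h 1
  have h2 := congrFun h 2
  simp [cayleyM, cayleyP, mulVec, dotProduct, Fin.sum_univ_four] at h1 h2
  have ha : a = v₁ - u₁ := by linear_combination h1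
  have hb : b = v₂ - u₂ - 3*(v₁ - u₁)*u₁ := by
    linear_combination h2 - 3*u₁*h1
  simp [ha, hb]
end

section
/- Let K be a commutative field, f(p₀,p₁,p₂,p₃) = p₀p₁p₂ − p₁³ − p₀²p₃, and let W be a two-dimensional linear subspace of K⁴ all of whose nonzero vectors p satisfy f(p) = 0. Then either W = span{(0,0,1,0), (0,0,0,1)}, or there exists a ∈ K such that W = span{(1, a, a², 0), (0, 0, 1, a)}. Conversely, every nonzero vector in each of these subspaces satisfies f(p) = 0; i.e., the lines contained in the Cayley surface F are exactly g∞ and the generators g(1,a), a ∈ K. -/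
lemma span_pair_finrank {K : Type*} [Field K] {x y : Fin 4 → K}
    (h : LinearIndependent K ![x, y]) :
    Module.finrank K (Submodule.span K ({x, y} : Set (Fin 4 → K))) = 2 := by
  have hr : ({x, y} : Set (Fin 4 → K)) = Set.range ![x, y] := by
    simp [Matrix.range_cons, Matrix.range_empty]
    exact Set.pair_comm x y
  rw [hr, finrank_span_eq_card h]
  simp

theorem stmt_4 {K : Type*} [Field K] :
    (∀ W : Submodule K (Fin 4 → K), Module.finrank K W = 2 →
      (∀ p ∈ W, p ≠ 0 → cayleyF p = 0) →
      (W = Submodule.span K ({![0,0,1,0], ![0,0,0,1]} : Set (Fin 4 → K)) ∨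
        ∃ a : K, W = Submodule.span K ({![1,a,a^2,0], ![0,0,1,a]} : Set (Fin 4 → K)))) ∧
    (∀ p ∈ Submodule.span K ({![0,0,1,0], ![0,0,0,1]} : Set (Fin 4 → K)),
        p ≠ 0 → cayleyF p = 0) ∧
    (∀ a : K, ∀ p ∈ Submodule.span K ({![1,a,a^2,0], ![0,0,1,a]} : Set (Fin 4 → K)),
        p ≠ 0 → cayleyF p = 0) := by
  refine ⟨?_, ?_, ?_⟩
  · intro W hW H
    by_cases h0 : ∀ p ∈ W, p 0 = 0
    · -- W = g∞
      left
      have hle : W ≤ Submodule.span K ({![0,0,1,0], ![0,0,0,1]} : Set (Fin 4 → K)) := by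
        intro p hp
        have hp0 : p 0 = 0 := h0 p hp
        have hp1 : p 1 = 0 := by
          by_cases hz : p = 0
          · simp [hz]
          · have h := H p hp hz
            simp only [cayleyF, hp0] at h
            have h1 : (p 1)^3 = 0 := by linear_combination -h
            exact pow_eq_zero_iff (by norm_num) |>.mp h1
        rw [Submodule.mem_span_pair]
        refine ⟨p 2, p 3, ?_⟩
        funext i
        fin_cases i <;> simp [hp0, hp1]
      have hind : LinearIndependent K ![(![0,0,1,0] : Fin 4 → K), ![0,0,0,1]] := by
        rw [LinearIndependent.pair_iff]
        intro s t hst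
        constructor
        · have := congrFun hst 2; simpa using this
        · have := congrFun hst 3; simpa using this
      exact Submodule.eq_of_le_of_finrank_le hle (by rw [span_pair_finrank hind, hW])
    · -- generator case
      right
      push_neg at h0
      obtain ⟨u, huW, hu0⟩ : ∃ u ∈ W, u 0 = 1 := by
        obtain ⟨u', hu'W, hu'0⟩ := h0
        exact ⟨(u' 0)⁻¹ • u', Submodule.smul_mem W _ hu'W, by simp [inv_mul_cancel₀ hu'0]⟩
      have hune : u ≠ 0 := fun h => by simp [h] at hu0
      have hc : u 3 = u 1 * u 2 - (u 1)^3 := by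
        have h := H u huW hune
        simp only [cayleyF, hu0] at h
        linear_combination -h
      -- get v ∈ W with v 0 = 0, v ≠ 0
      obtain ⟨v, hvW, hvne, hv0⟩ :
          ∃ v ∈ W, v ≠ (0 : Fin 4 → K) ∧ v 0 = 0 := by
        set φ : W →ₗ[K] K := (LinearMap.proj 0).comp W.subtype with hφ
        have hker : LinearMap.ker φ ≠ ⊥ := by
          intro hk
          have h1 : Module.finrank K (LinearMap.ker φ) = 0 := by rw [hk]; simp
          have h2 := LinearMap.finrank_range_add_finrank_ker φ
          have h3 : Module.finrank K (LinearMap.range φ) ≤ 1 := by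
            simpa using Submodule.finrank_le (LinearMap.range φ)
          omega
        obtain ⟨x, hx, hxne⟩ := (Submodule.ne_bot_iff _).mp hker
        refine ⟨(x : Fin 4 → K), x.2, fun h => hxne (Subtype.ext h), ?_⟩
        have : φ x = 0 := hx
        simpa [hφ] using this
      have hv1 : v 1 = 0 := by
        have h := H v hvW hvne
        simp only [cayleyF, hv0] at h
        have h1 : (v 1)^3 = 0 := by linear_combination -h
        exact pow_eq_zero_iff (by norm_num) |>.mp h1
      have hv3 : v 3 = u 1 * v 2 := by
        have hsum : u + v ∈ W := Submodule.add_mem W huW hvW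
        have hsne : u + v ≠ 0 := by
          intro h
          have := congrFun h 0
          simp [hu0, hv0] at this
        have h := H (u + v) hsum hsne
        simp only [cayleyF, Pi.add_apply, hu0, hv0, hv1, hc] at h
        linear_combination -h
      have hr : v 2 ≠ 0 := by
        intro h
        apply hvne
        funext i
        fin_cases i <;> simp [hv0, hv1, h, hv3]
      refine ⟨u 1, ?_⟩
      have hw2 : (![0,0,1,u 1] : Fin 4 → K) ∈ W := by
        have heq : (![0,0,1,u 1] : Fin 4 → K) = (v 2)⁻¹ • v := by
          funext i
          fin_cases i
          · show (0:K) = (v 2)⁻¹ * v 0; rw [hv0, mul_zero]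
          · show (0:K) = (v 2)⁻¹ * v 1; rw [hv1, mul_zero]
          · show (1:K) = (v 2)⁻¹ * v 2; rw [inv_mul_cancel₀ hr]
          · show u 1 = (v 2)⁻¹ * v 3
            rw [hv3, mul_comm (u 1), ← mul_assoc, inv_mul_cancel₀ hr, one_mul]
        rw [heq]; exact Submodule.smul_mem W _ hvW
      have hw1 : (![1,u 1,(u 1)^2,0] : Fin 4 → K) ∈ W := by
        have heq : (![1,u 1,(u 1)^2,0] : Fin 4 → K) = u - (u 2 - (u 1)^2) • ![0,0,1,u 1] := by
          funext i
          fin_cases i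
          · show (1:K) = u 0 - (u 2 - (u 1)^2) * 0; rw [hu0]; ring
          · show u 1 = u 1 - (u 2 - (u 1)^2) * 0; ring
          · show (u 1)^2 = u 2 - (u 2 - (u 1)^2) * 1; ring
          · show (0:K) = u 3 - (u 2 - (u 1)^2) * u 1; rw [hc]; ring
        rw [heq]; exact Submodule.sub_mem W huW (Submodule.smul_mem W _ hw2)
      have hle : Submodule.span K ({![1,u 1,(u 1)^2,0], ![0,0,1,u 1]} : Set (Fin 4 → K)) ≤ W := by
        rw [Submodule.span_le]
        intro x hx
        rcases hx with h | h <;> simp_all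
      have hind : LinearIndependent K ![(![1,u 1,(u 1)^2,0] : Fin 4 → K), ![0,0,1,u 1]] := by
        rw [LinearIndependent.pair_iff]
        intro s t hst
        have h1 := congrFun hst 0
        simp at h1
        subst h1
        have h2 := congrFun hst 2
        simp at h2
        exact ⟨rfl, h2⟩
      exact (Submodule.eq_of_le_of_finrank_le hle (by rw [hW, span_pair_finrank hind])).symm
  · intro p hp _
    rw [Submodule.mem_span_pair] at hp
    obtain ⟨s, t, rfl⟩ := hp
    simp [cayleyF]
  · intro a p hp _
    rw [Submodule.mem_span_pair] at hp
    obtain ⟨s, t, rfl⟩ := hp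
    simp only [cayleyF, Pi.add_apply, Pi.smul_apply, Matrix.cons_val_zero, Matrix.cons_val_one,
      Matrix.head_cons, Matrix.cons_val_two, Matrix.tail_cons, Matrix.cons_val_three,
      smul_eq_mul]
    ring
end

section
/- Let K be a commutative field with at least 4 elements, f(p₀,p₁,p₂,p₃) = p₀p₁p₂ − p₁³ − p₀²p₃, and let M ∈ GL₄(K) be such that M·(1,0,0,0)ᵀ is a scalar multiple of (1,0,0,0)ᵀ and such that for every nonzero p ∈ K⁴, f(p) = 0 if and only if f(M·p) = 0. Then there exist λ ∈ K \ {0} and c ∈ K \ {0} such that M = λ·diag(1, c, c², c³). In other words, the stabilizer of the Cayley surface F and of the point Q₀ = K(1,0,0,0)ᵀ in the group of projective collineations of ℙ₃(K) consists exactly of the collineations induced by the matrices M_{0,0,c} = diag(1,c,c²,c³), c ∈ K \ {0}. -/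
open Matrix

open Polynomial in
private lemma vanish3 {K : Type*} [Field K] (hK : (4 : Cardinal) ≤ Cardinal.mk K)
    (c0 c1 c2 c3 : K) (h : ∀ u : K, c0 + c1*u + c2*u^2 + c3*u^3 = 0) :
    c0 = 0 ∧ c1 = 0 ∧ c2 = 0 ∧ c3 = 0 := by
  have hp : (C c0 + C c1 * X + C c2 * X^2 + C c3 * X^3 : K[X]) = 0 := by
    apply Polynomial.eq_zero_of_forall_eval_zero_of_natDegree_lt_card
    · intro r; simpa using h r
    · have hd : (C c0 + C c1 * X + C c2 * X^2 + C c3 * X^3 : K[X]).natDegree ≤ 3 := by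
        compute_degree
      calc ((C c0 + C c1 * X + C c2 * X^2 + C c3 * X^3 : K[X]).natDegree : Cardinal)
          ≤ 3 := by exact_mod_cast hd
        _ < 4 := by norm_num
        _ ≤ Cardinal.mk K := hK
  refine ⟨?_, ?_, ?_, ?_⟩ <;>
    [ (have := congrArg (fun p => Polynomial.coeff p 0) hp);
      (have := congrArg (fun p => Polynomial.coeff p 1) hp);
      (have := congrArg (fun p => Polynomial.coeff p 2) hp);
      (have := congrArg (fun p => Polynomial.coeff p 3) hp)] <;> simpa using this

open Polynomial in
private lemma vanish4 {K : Type*} [Field K] (hK : (5 : Cardinal) ≤ Cardinal.mk K)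
    (c0 c1 c2 c3 c4 : K) (h : ∀ u : K, c0 + c1*u + c2*u^2 + c3*u^3 + c4*u^4 = 0) :
    c0 = 0 ∧ c1 = 0 ∧ c2 = 0 ∧ c3 = 0 ∧ c4 = 0 := by
  have hp : (C c0 + C c1 * X + C c2 * X^2 + C c3 * X^3 + C c4 * X^4 : K[X]) = 0 := by
    apply Polynomial.eq_zero_of_forall_eval_zero_of_natDegree_lt_card
    · intro r; simpa using h r
    · have hd : (C c0 + C c1 * X + C c2 * X^2 + C c3 * X^3 + C c4 * X^4 : K[X]).natDegree ≤ 4 := by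
        compute_degree
      calc ((C c0 + C c1 * X + C c2 * X^2 + C c3 * X^3 + C c4 * X^4 : K[X]).natDegree : Cardinal)
          ≤ 4 := by exact_mod_cast hd
        _ < 5 := by norm_num
        _ ≤ Cardinal.mk K := hK
  refine ⟨?_, ?_, ?_, ?_, ?_⟩ <;>
    [ (have := congrArg (fun p => Polynomial.coeff p 0) hp);
      (have := congrArg (fun p => Polynomial.coeff p 1) hp);
      (have := congrArg (fun p => Polynomial.coeff p 2) hp);
      (have := congrArg (fun p => Polynomial.coeff p 3) hp);
      (have := congrArg (fun p => Polynomial.coeff p 4) hp)] <;> simpa using this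

open Polynomial in
private lemma vanish2fin {K : Type*} [Field K] (s : Finset K) (hs : 3 ≤ s.card)
    (c0 c1 c2 : K) (h : ∀ u ∈ s, c0 + c1*u + c2*u^2 = 0) :
    c0 = 0 ∧ c1 = 0 ∧ c2 = 0 := by
  have hp : (C c0 + C c1 * X + C c2 * X^2 : K[X]) = 0 := by
    apply Polynomial.eq_zero_of_natDegree_lt_card_of_eval_eq_zero' _ s
    · intro u hu; simpa using h u hu
    · have hd : (C c0 + C c1 * X + C c2 * X^2 : K[X]).natDegree ≤ 2 := by compute_degree
      omega
  refine ⟨?_, ?_, ?_⟩ <;>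
    [ (have := congrArg (fun p => Polynomial.coeff p 0) hp);
      (have := congrArg (fun p => Polynomial.coeff p 1) hp);
      (have := congrArg (fun p => Polynomial.coeff p 2) hp)] <;> simpa using this

theorem stmt_5 {K : Type*} [Field K] (hK : (4 : Cardinal) ≤ Cardinal.mk K)
    (M : Matrix (Fin 4) (Fin 4) K) (hM : IsUnit M)
    (hQ₀ : ∃ t : K, M *ᵥ ![1,0,0,0] = t • ![1,0,0,0])
    (hF : ∀ p : Fin 4 → K, p ≠ 0 → (cayleyF p = 0 ↔ cayleyF (M *ᵥ p) = 0)) :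
    ∃ lam c : K, lam ≠ 0 ∧ c ≠ 0 ∧
      M = lam • Matrix.diagonal ![1, c, c^2, c^3] := by
  obtain ⟨t, ht⟩ := hQ₀
  have hc : ∀ a b c d : K, cayleyF ![a,b,c,d] = a*b*c - b^3 - a^2*d := by
    intro a b c d; simp [cayleyF]
  have h00 : M 0 0 = t := by
    have := congrFun ht 0; simpa [Matrix.mulVec, dotProduct, Fin.sum_univ_four] using this
  have h10 : M 1 0 = 0 := by
    have := congrFun ht 1; simpa [Matrix.mulVec, dotProduct, Fin.sum_univ_four] using this
  have h20 : M 2 0 = 0 := by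
    have := congrFun ht 2; simpa [Matrix.mulVec, dotProduct, Fin.sum_univ_four] using this
  have h30 : M 3 0 = 0 := by
    have := congrFun ht 3; simpa [Matrix.mulVec, dotProduct, Fin.sum_univ_four] using this
  have hdet : IsUnit M.det := (Matrix.isUnit_iff_isUnit_det M).mp hM
  have hinj : ∀ v : Fin 4 → K, M *ᵥ v = 0 → v = 0 := by
    intro v hv
    have : M⁻¹ *ᵥ (M *ᵥ v) = v := by
      rw [Matrix.mulVec_mulVec, Matrix.nonsing_inv_mul M hdet, Matrix.one_mulVec]
    rw [hv, Matrix.mulVec_zero] at this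
    exact this.symm
  have ht0 : t ≠ 0 := by
    intro h
    rw [h, zero_smul] at ht
    have := congrFun (hinj _ ht) 0
    simp at this
  have hFM : ∀ p0 p1 p2 p3 : K, p0 ≠ 0 ∨ p2 ≠ 0 ∨ p3 ≠ 0 → cayleyF ![p0,p1,p2,p3] = 0 →
      (M 0 0 * p0 + M 0 1 * p1 + M 0 2 * p2 + M 0 3 * p3) *
        (M 1 0 * p0 + M 1 1 * p1 + M 1 2 * p2 + M 1 3 * p3) *
        (M 2 0 * p0 + M 2 1 * p1 + M 2 2 * p2 + M 2 3 * p3) -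
      (M 1 0 * p0 + M 1 1 * p1 + M 1 2 * p2 + M 1 3 * p3)^3 -
      (M 0 0 * p0 + M 0 1 * p1 + M 0 2 * p2 + M 0 3 * p3)^2 *
        (M 3 0 * p0 + M 3 1 * p1 + M 3 2 * p2 + M 3 3 * p3) = 0 := by
    intro p0 p1 p2 p3 hne h0
    have hne' : (![p0,p1,p2,p3] : Fin 4 → K) ≠ 0 := by
      intro h
      rcases hne with h' | h' | h'
      · exact h' (by simpa using congrFun h 0)
      · exact h' (by simpa using congrFun h 2)
      · exact h' (by simpa using congrFun h 3)
    have h1 := (hF _ hne').mp h0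
    have h2 : M *ᵥ ![p0,p1,p2,p3] =
        ![M 0 0 * p0 + M 0 1 * p1 + M 0 2 * p2 + M 0 3 * p3,
          M 1 0 * p0 + M 1 1 * p1 + M 1 2 * p2 + M 1 3 * p3,
          M 2 0 * p0 + M 2 1 * p1 + M 2 2 * p2 + M 2 3 * p3,
          M 3 0 * p0 + M 3 1 * p1 + M 3 2 * p2 + M 3 3 * p3] := by
      funext i
      fin_cases i <;> simp [Matrix.mulVec, dotProduct, Fin.sum_univ_four]
    rw [h2, hc] at h1
    exact h1
  -- Family 1 : points ![a,0,1,0]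
  have q1 : ∀ a : K,
      (M 0 2*M 1 2*M 2 2 - M 1 2^3 - M 0 2^2*M 3 2) +
      (t*M 1 2*M 2 2 - 2*t*M 0 2*M 3 2)*a + (-(t^2*M 3 2))*a^2 + 0*a^3 = 0 := by
    intro a
    have h := hFM a 0 1 0 (Or.inr (Or.inl one_ne_zero)) (by rw [hc]; ring)
    rw [h00, h10, h20, h30] at h
    linear_combination h
  obtain ⟨f0, f1, f2, -⟩ := vanish3 hK _ _ _ _ q1
  have h32 : M 3 2 = 0 := by
    have h' : t^2 * M 3 2 = 0 := by linear_combination -f2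
    exact (mul_eq_zero.mp h').resolve_left (pow_ne_zero 2 ht0)
  have h12 : M 1 2 = 0 := by
    have hmm : M 1 2 * M 2 2 = 0 := by
      have h' : t * (M 1 2 * M 2 2) = 0 := by linear_combination f1 + (2*t*M 0 2)*h32
      exact (mul_eq_zero.mp h').resolve_left ht0
    have hcube : M 1 2^3 = 0 := by linear_combination -f0 + (M 0 2)*hmm - (M 0 2^2)*h32
    exact pow_eq_zero_iff (by norm_num) |>.mp hcube
  -- Family 2 : points ![0,0,a,1]
  have q2 : ∀ a : K,
      (M 0 3*M 1 3*M 2 3 - M 1 3^3 - M 0 3^2*M 3 3) +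
      (M 0 2*M 1 3*M 2 3 + M 0 3*M 1 3*M 2 2 - 2*M 0 2*M 0 3*M 3 3)*a +
      (M 0 2*M 1 3*M 2 2 - M 0 2^2*M 3 3)*a^2 + 0*a^3 = 0 := by
    intro a
    have h := hFM 0 0 a 1 (Or.inr (Or.inr one_ne_zero)) (by rw [hc]; ring)
    rw [h00, h10, h20, h30, h12, h32] at h
    linear_combination h
  obtain ⟨e0, e1, e2, -⟩ := vanish3 hK _ _ _ _ q2
  -- M 0 2 = 0
  have hM02 : M 0 2 = 0 := by
    by_contra hC0
    have hE2 : M 1 3 * M 2 2 - M 0 2 * M 3 3 = 0 := by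
      have h' : M 0 2 * (M 1 3 * M 2 2 - M 0 2 * M 3 3) = 0 := by linear_combination e2
      exact (mul_eq_zero.mp h').resolve_left hC0
    have hE1 : M 1 3 * M 2 3 - M 0 3 * M 3 3 = 0 := by
      have h' : M 0 2 * (M 1 3 * M 2 3 - M 0 3 * M 3 3) = 0 := by
        linear_combination e1 - M 0 3 * hE2
      exact (mul_eq_zero.mp h').resolve_left hC0
    have hD1 : M 1 3 = 0 := by
      have hcube : M 1 3^3 = 0 := by linear_combination -e0 + M 0 3 * hE1
      exact pow_eq_zero_iff (by norm_num) |>.mp hcube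
    have hD3 : M 3 3 = 0 := by
      have h' : M 0 2 * M 3 3 = 0 := by linear_combination -hE2 + M 2 2 * hD1
      exact (mul_eq_zero.mp h').resolve_left hC0
    by_cases hcd : M 2 2 = 0 ∧ M 2 3 = 0
    · have hv : M *ᵥ ![M 0 2, 0, -t, 0] = 0 := by
        funext i
        fin_cases i <;>
          (try simp [Matrix.mulVec, dotProduct, Fin.sum_univ_four, h00, h10, h20, h30,
            h12, h32, hcd.1, hcd.2]) <;> (try field_simp) <;> (try ring)
      exact hC0 (by simpa using congrFun (hinj _ hv) 0)
    · have hv : M *ᵥ ![(M 2 2 * M 0 3 - M 2 3 * M 0 2)/t, 0, M 2 3, -(M 2 2)] = 0 := by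
        funext i
        fin_cases i <;>
          (try simp [Matrix.mulVec, dotProduct, Fin.sum_univ_four, h00, h10, h20, h30,
            h12, h32, hD1, hD3]) <;> (try field_simp) <;> (try ring)
      have hv0 := hinj _ hv
      have hA := congrFun hv0 2
      have hB := congrFun hv0 3
      simp at hA hB
      exact hcd ⟨hB, hA⟩
  -- M 2 2 ≠ 0
  have hM22 : M 2 2 ≠ 0 := by
    intro h22
    have hv : M *ᵥ ![0, 0, 1, 0] = 0 := by
      funext i
      fin_cases i <;>
        simp [Matrix.mulVec, dotProduct, Fin.sum_univ_four, hM02, h12, h22, h32]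
    have := congrFun (hinj _ hv) 2
    simp at this
  -- M 0 3 = 0
  have hM03 : M 0 3 = 0 := by
    by_contra hD0
    have hD1 : M 1 3 = 0 := by
      have h' : M 0 3 * M 1 3 * M 2 2 = 0 := by linear_combination e1 - M 1 3 * M 2 3 * hM02 + 2 * M 0 3 * M 3 3 * hM02
      rcases mul_eq_zero.mp h' with h'' | h''
      · exact (mul_eq_zero.mp h'').resolve_left hD0
      · exact absurd h'' hM22
    have hD3 : M 3 3 = 0 := by
      have h' : M 0 3 ^ 2 * M 3 3 = 0 := by
        linear_combination -e0 + (M 0 3 * M 2 3 - M 1 3 ^ 2)*hD1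
      exact (mul_eq_zero.mp h').resolve_left (pow_ne_zero 2 hD0)
    have hv : M *ᵥ ![-(M 0 3), 0, -(t * M 2 3)/M 2 2, t] = 0 := by
      funext i
      fin_cases i <;>
        (try simp [Matrix.mulVec, dotProduct, Fin.sum_univ_four, h00, h10, h20, h30,
          hM02, h12, h32, hD1, hD3]) <;> (try field_simp) <;> (try ring)
    have := congrFun (hinj _ hv) 3
    simp at this
    exact ht0 this
  -- M 1 3 = 0
  have hM13 : M 1 3 = 0 := by
    have hcube : M 1 3^3 = 0 := by
      linear_combination -e0 + (M 1 3 * M 2 3 - M 0 3 * M 3 3) * hM03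
    exact pow_eq_zero_iff (by norm_num) |>.mp hcube
  -- M 3 3 ≠ 0
  have hM33 : M 3 3 ≠ 0 := by
    intro h33
    have hv : M *ᵥ ![0, 0, M 2 3, -(M 2 2)] = 0 := by
      funext i
      fin_cases i <;>
        (try simp [Matrix.mulVec, dotProduct, Fin.sum_univ_four, h00, h10, h20, h30,
          hM02, h12, h32, hM03, hM13, h33]) <;> (try ring)
    have := congrFun (hinj _ hv) 3
    simp at this
    exact hM22 this
  -- M 1 1 ≠ 0
  have hM11 : M 1 1 ≠ 0 := by
    intro h11
    have hw : M *ᵥ (M⁻¹ *ᵥ ![0,1,0,0]) = ![0,1,0,0] := by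
      rw [Matrix.mulVec_mulVec, Matrix.mul_nonsing_inv M hdet, Matrix.one_mulVec]
    have h1 := congrFun hw 1
    simp [Matrix.mulVec, dotProduct, Fin.sum_univ_four, h10, h11, h12, hM13] at h1
  -- main affine family
  have key : ∀ u v : K,
      (t + M 0 1*u)*(M 1 1*u)*(M 2 1*u + M 2 2*v + M 2 3*(u*v - u^3)) - (M 1 1*u)^3 -
        (t + M 0 1*u)^2*(M 3 1*u + M 3 3*(u*v - u^3)) = 0 := by
    intro u v
    have h := hFM 1 u v (u*v - u^3) (Or.inl one_ne_zero) (by rw [hc]; ring)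
    rw [h00, h10, h20, h30, hM02, h12, h32, hM03, hM13] at h
    linear_combination h
  -- linear-in-v coefficients
  obtain ⟨-, l1, l2, l3⟩ := vanish3 hK 0
      (t*(M 1 1*M 2 2 - M 3 3*t))
      (M 0 1*(M 1 1*M 2 2 - M 3 3*t) + t*(M 1 1*M 2 3 - M 3 3*M 0 1))
      (M 0 1*(M 1 1*M 2 3 - M 3 3*M 0 1))
      (fun u => by linear_combination key u 1 - key u 0)
  have hA : M 1 1 * M 2 2 - M 3 3 * t = 0 := by
    have := mul_eq_zero.mp l1
    exact this.resolve_left ht0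
  have hB : M 1 1 * M 2 3 - M 3 3 * M 0 1 = 0 := by
    have h' : t * (M 1 1*M 2 3 - M 3 3*M 0 1) = 0 := by linear_combination l2 - M 0 1 * hA
    exact (mul_eq_zero.mp h').resolve_left ht0
  -- the quartic identity
  have hg : ∀ u : K, 0 + (-(M 3 1*t^2))*u + (M 1 1*M 2 1*t - 2*M 3 1*t*M 0 1)*u^2 +
      (M 1 1*M 2 1*M 0 1 - M 1 1^3 - M 3 1*M 0 1^2 + M 3 3*t^2)*u^3 + (t*M 3 3*M 0 1)*u^4 = 0 := by
    intro u
    linear_combination key u 0 + (t*u^4 + M 0 1*u^5) * hB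
  -- case split on the size of K
  have final : M 0 1 = 0 ∧ M 2 1 = 0 ∧ M 3 1 = 0 ∧ M 2 3 = 0 ∧ M 3 3 * t^2 = M 1 1^3 := by
    by_cases h5 : (5 : Cardinal) ≤ Cardinal.mk K
    · obtain ⟨-, k1, k2, k3, k4⟩ := vanish4 h5 _ _ _ _ _ hg
      have hδ : M 3 1 = 0 := by
        have h' : t^2 * M 3 1 = 0 := by linear_combination -k1
        exact (mul_eq_zero.mp h').resolve_left (pow_ne_zero 2 ht0)
      have hα : M 0 1 = 0 := by
        have h' : t * (M 3 3 * M 0 1) = 0 := by linear_combination k4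
        rcases mul_eq_zero.mp h' with h'' | h''
        · exact absurd h'' ht0
        · exact (mul_eq_zero.mp h'').resolve_left hM33
      have hγ : M 2 1 = 0 := by
        have h' : M 1 1 * M 2 1 * t = 0 := by linear_combination k2 + 2*t*M 0 1*hδ
        rcases mul_eq_zero.mp h' with h'' | h''
        · exact (mul_eq_zero.mp h'').resolve_left hM11
        · exact absurd h'' ht0
      have hx : M 2 3 = 0 := by
        have h' : M 1 1 * M 2 3 = 0 := by linear_combination hB + M 3 3 * hα
        exact (mul_eq_zero.mp h').resolve_left hM11
      refine ⟨hα, hγ, hδ, hx, ?_⟩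
      linear_combination k3 - (M 1 1 * M 0 1) * hγ + (M 0 1^2) * hδ
    · -- K has exactly 4 elements
      push_neg at h5
      haveI hfin : Finite K := by
        rw [← Cardinal.lt_aleph0_iff_finite]
        exact h5.trans (Cardinal.nat_lt_aleph0 5)
      letI := Fintype.ofFinite K
      have hcard : Fintype.card K = 4 := by
        rw [Cardinal.mk_fintype] at hK h5
        have h1 : 4 ≤ Fintype.card K := by exact_mod_cast hK
        have h2 : Fintype.card K < 5 := by exact_mod_cast h5
        omega
      have htwo : (2 : K) = 0 := by
        have h4 : ((4 : ℕ) : K) = 0 := by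
          rw [← hcard]; exact FiniteField.cast_card_eq_zero K
        have : (2:K) * (2:K) = 0 := by
          have : ((4:ℕ):K) = (2:K)*(2:K) := by norm_num
          rw [← this, h4]
        exact mul_self_eq_zero.mp this
      have hcube : ∀ u : K, u ≠ 0 → u^3 = 1 := by
        intro u hu
        have h' := FiniteField.pow_card_sub_one_eq_one u hu
        rw [hcard] at h'
        norm_num at h'
        exact h'
      letI := Classical.decEq K
      have hserase : 3 ≤ ((Finset.univ : Finset K).erase 0).card := by
        rw [Finset.card_erase_of_mem (Finset.mem_univ 0), Finset.card_univ, hcard]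
      obtain ⟨p0, p1, p2⟩ := vanish2fin _ hserase
          (M 1 1*M 2 1*M 0 1 - M 1 1^3 - M 3 1*M 0 1^2 + M 3 3*t^2)
          (-(M 3 1*t^2) + t*M 3 3*M 0 1)
          (M 1 1*M 2 1*t - 2*M 3 1*t*M 0 1)
          (fun u hu => by
            have hu0 : u ≠ 0 := Finset.ne_of_mem_erase hu
            have h3 := hcube u hu0
            linear_combination hg u -
              ((M 1 1*M 2 1*M 0 1 - M 1 1^3 - M 3 1*M 0 1^2 + M 3 3*t^2) + (t*M 3 3*M 0 1)*u) * h3)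
      have hγ : M 2 1 = 0 := by
        have h' : M 1 1 * M 2 1 * t = 0 := by linear_combination p2 + M 3 1*t*M 0 1*htwo
        rcases mul_eq_zero.mp h' with h'' | h''
        · exact (mul_eq_zero.mp h'').resolve_left hM11
        · exact absurd h'' ht0
      have hδt : M 3 1 * t - M 3 3 * M 0 1 = 0 := by
        have h' : t * (M 3 1 * t - M 3 3 * M 0 1) = 0 := by linear_combination -p1
        exact (mul_eq_zero.mp h').resolve_left ht0
      have hα : M 0 1 = 0 := by
        by_contra hα
        have ht3 := hcube t ht0
        have hα3 := hcube _ hα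
        have hβ3 := hcube _ hM11
        have : t = 0 := by
          linear_combination (-t)*p0 + (t*M 1 1*M 0 1)*hγ - (M 0 1^2)*hδt +
            M 3 3*ht3 - M 3 3*hα3 - t*hβ3
        exact ht0 this
      have hδ : M 3 1 = 0 := by
        have h' : M 3 1 * t = 0 := by linear_combination hδt + M 3 3 * hα
        exact (mul_eq_zero.mp h').resolve_right ht0
      have hx : M 2 3 = 0 := by
        have h' : M 1 1 * M 2 3 = 0 := by linear_combination hB + M 3 3 * hα
        exact (mul_eq_zero.mp h').resolve_left hM11
      refine ⟨hα, hγ, hδ, hx, ?_⟩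
      linear_combination p0 - (M 1 1 * M 0 1) * hγ + (M 0 1^2) * hδ
  obtain ⟨hα, hγ, hδ, hx, hyt⟩ := final
  -- conclusion
  refine ⟨t, M 1 1 / t, ht0, div_ne_zero hM11 ht0, ?_⟩
  have h22' : M 2 2 * t = M 1 1^2 := by
    have h' : M 1 1 * (M 2 2 * t) = M 1 1 * M 1 1^2 := by
      linear_combination t * hA + hyt
    exact mul_left_cancel₀ hM11 h'
  ext i j
  fin_cases i <;> fin_cases j <;>
    simp [Matrix.diagonal_apply, h00, h10, h20, h30, hα, hγ, hδ, hM02, h12, h32,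
      hM03, hM13, hx]
  · field_simp
  · field_simp
    linear_combination h22'
  · field_simp
    linear_combination hyt
end

section
/- Let K be a commutative field with exactly 3 elements, f(p₀,p₁,p₂,p₃) = p₀p₁p₂ − p₁³ − p₀²p₃, and let M ∈ GL₄(K) be such that M·(1,0,0,0)ᵀ is a scalar multiple of (1,0,0,0)ᵀ and such that for every nonzero p ∈ K⁴, f(p) = 0 if and only if f(M·p) = 0. Then M is a scalar multiple of one of the following matrices: diag(1, c, c², c³) for some c ∈ K \ {0}, or N_c for some c ∈ K \ {0}, where N_c is the matrix with rows (1,0,0,0), (0,c,0,0), (0,0,2,0), (0,c,0,2c). Conversely, each of these matrices induces a projective collineation fixing F and Q₀ = K(1,0,0,0)ᵀ. -/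
open Matrix

/-- The matrix `N_c` from the paper. -/
def cayleyN {K : Type*} [Field K] (c : K) : Matrix (Fin 4) (Fin 4) K :=
  !![1, 0, 0, 0;
     0, c, 0, 0;
     0, 0, 2, 0;
     0, c, 0, 2*c]

namespace CayleyAux

instance : Fact (Nat.Prime 3) := ⟨by norm_num⟩

set_option maxHeartbeats 2000000

lemma eta4 {α : Type*} (A : Matrix (Fin 4) (Fin 4) α) :
    A = !![A 0 0, A 0 1, A 0 2, A 0 3; A 1 0, A 1 1, A 1 2, A 1 3;
           A 2 0, A 2 1, A 2 2, A 2 3; A 3 0, A 3 1, A 3 2, A 3 3] := by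
  ext i j
  fin_cases i <;> fin_cases j <;> rfl

lemma lemA : ∀ t e g h i : ZMod 3, t ≠ 0 →
    cayleyF ![e, g, h, i] = 0 → cayleyF ![t + e, g, h, i] = 0 →
    cayleyF ![t + e * 2, g * 2, h * 2, i * 2] = 0 → g = 0 ∧ i = 0 := by decide

lemma lemB : ∀ e h j k l m : ZMod 3, (h ≠ 0 ∧ ¬(k = 0 ∧ m = 0) ∧
    cayleyF ![j, k, l, m] = 0 ∧ cayleyF ![e + j, k, h + l, m] = 0 ∧
    cayleyF ![e + j * 2, k * 2, h + l * 2, m * 2] = 0) →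
    e = 0 ∧ j = 0 ∧ k = 0 := by decide

lemma lemC : ∀ t a b c d h l m : ZMod 3, (t ≠ 0 ∧ h ≠ 0 ∧ m ≠ 0 ∧
    ¬ cayleyF ![a, b, c, d] = 0 ∧
    (∀ s : ZMod 3, cayleyF ![t + a, b, c + h * s + l * (s - 1), d + m * (s - 1)] = 0) ∧
    (∀ s : ZMod 3, cayleyF ![t + a * 2, b * 2, c * 2 + h * s + l * (s * 2 + 1),
      d * 2 + m * (s * 2 + 1)] = 0)) →
    ∃ lam : ZMod 3, lam ≠ 0 ∧
      ((∃ c' : ZMod 3, c' ≠ 0 ∧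
          !![t, a, 0, 0; 0, b, 0, 0; 0, c, h, l; 0, d, 0, m]
            = lam • Matrix.diagonal ![1, c', c'^2, c'^3]) ∨
       (∃ c' : ZMod 3, c' ≠ 0 ∧
          !![t, a, 0, 0; 0, b, 0, 0; 0, c, h, l; 0, d, 0, m] = lam • cayleyN c')) := by decide

lemma lemD1 : ∀ c : ZMod 3, c ≠ 0 →
    (Matrix.diagonal ![1, c, c^2, c^3]) * (Matrix.diagonal ![1, c, c^2, c^3]) = 1 := by decide

lemma lemD2 : ∀ c : ZMod 3, c ≠ 0 → cayleyN c * cayleyN c = 1 := by decide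

lemma lemD3 : ∀ c : ZMod 3, c ≠ 0 →
    (∃ t : ZMod 3, (Matrix.diagonal ![1, c, c^2, c^3]) *ᵥ ![1,0,0,0] = t • ![1,0,0,0]) ∧
    (∀ p : Fin 4 → ZMod 3, p ≠ 0 →
      (cayleyF p = 0 ↔ cayleyF ((Matrix.diagonal ![1, c, c^2, c^3]) *ᵥ p) = 0)) ∧
    (∃ t : ZMod 3, cayleyN c *ᵥ ![1,0,0,0] = t • ![1,0,0,0]) ∧
    (∀ p : Fin 4 → ZMod 3, p ≠ 0 → (cayleyF p = 0 ↔ cayleyF (cayleyN c *ᵥ p) = 0)) := by decide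

/-- Main classification over `ZMod 3`. -/
lemma zmod_main (M : Matrix (Fin 4) (Fin 4) (ZMod 3)) (hU : IsUnit M)
    (hT : ∃ t : ZMod 3, M *ᵥ ![1,0,0,0] = t • ![1,0,0,0])
    (hF : ∀ p : Fin 4 → ZMod 3, p ≠ 0 → (cayleyF p = 0 ↔ cayleyF (M *ᵥ p) = 0)) :
    ∃ lam : ZMod 3, lam ≠ 0 ∧
      ((∃ c : ZMod 3, c ≠ 0 ∧ M = lam • Matrix.diagonal ![1, c, c^2, c^3]) ∨
       (∃ c : ZMod 3, c ≠ 0 ∧ M = lam • cayleyN c)) := by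
  obtain ⟨t, ht⟩ := hT
  have hdet : M.det ≠ 0 := by
    intro h0
    have := (Matrix.isUnit_iff_isUnit_det M).mp hU
    rw [h0] at this
    exact not_isUnit_zero this
  have hker : ∀ v : Fin 4 → ZMod 3, M *ᵥ v = 0 → v = 0 := by
    intro v hv
    by_contra hv0
    exact hdet ((Matrix.exists_mulVec_eq_zero_iff).mp ⟨v, hv0, hv⟩)
  have key : ∀ v : Fin 4 → ZMod 3, M *ᵥ v =
      ![M 0 0 * v 0 + M 0 1 * v 1 + M 0 2 * v 2 + M 0 3 * v 3,
        M 1 0 * v 0 + M 1 1 * v 1 + M 1 2 * v 2 + M 1 3 * v 3,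
        M 2 0 * v 0 + M 2 1 * v 1 + M 2 2 * v 2 + M 2 3 * v 3,
        M 3 0 * v 0 + M 3 1 * v 1 + M 3 2 * v 2 + M 3 3 * v 3] := by
    intro v; funext i; fin_cases i <;>
      simp [Matrix.mulVec, dotProduct, Fin.sum_univ_four]
  have h10 : M 1 0 = 0 := by
    have := congrFun ht 1
    rw [key] at this
    simpa using this
  have h20 : M 2 0 = 0 := by
    have := congrFun ht 2
    rw [key] at this
    simpa using this
  have h30 : M 3 0 = 0 := by
    have := congrFun ht 3
    rw [key] at this
    simpa using this
  have ht0 : M 0 0 ≠ 0 := by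
    intro h00
    have hv : M *ᵥ ![1,0,0,0] = 0 := by
      funext i; fin_cases i <;> simp [key, h00, h10, h20, h30]
    have h1 := hker _ hv
    exact one_ne_zero (congrFun h1 0)
  -- group A : the line through Q₀ and M e₂
  have pA0 : cayleyF ![M 0 2, M 1 2, M 2 2, M 3 2] = 0 := by
    have h := (hF ![0,0,1,0] (fun hp => one_ne_zero (congrFun hp 2))).mp (by decide)
    rw [key] at h
    simpa using h
  have pA1 : cayleyF ![M 0 0 + M 0 2, M 1 2, M 2 2, M 3 2] = 0 := by
    have h := (hF ![1,0,1,0] (fun hp => one_ne_zero (congrFun hp 0))).mp (by decide)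
    rw [key] at h
    simpa [h10, h20, h30] using h
  have pA2 : cayleyF ![M 0 0 + M 0 2 * 2, M 1 2 * 2, M 2 2 * 2, M 3 2 * 2] = 0 := by
    have h := (hF ![1,0,2,0] (fun hp => one_ne_zero (congrFun hp 0))).mp (by decide)
    rw [key] at h
    simpa [h10, h20, h30] using h
  obtain ⟨hg, hi⟩ := lemA (M 0 0) (M 0 2) (M 1 2) (M 2 2) (M 3 2) ht0 pA0 pA1 pA2
  -- M 2 2 ≠ 0
  have hh : M 2 2 ≠ 0 := by
    intro h22
    have hv : M *ᵥ ![M 0 2, 0, -(M 0 0), 0] = 0 := by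
      funext i; fin_cases i <;> (simp [key, h10, h20, h30, hg, hi, h22]; (try ring))
    have h1 := hker _ hv
    have h2 := congrFun h1 2
    simp only [Matrix.cons_val_two, Matrix.tail_cons, Matrix.head_cons, Pi.zero_apply,
      neg_eq_zero] at h2
    exact ht0 h2
  -- ¬ (M 1 3 = 0 ∧ M 3 3 = 0)
  have hkm : ¬ (M 1 3 = 0 ∧ M 3 3 = 0) := by
    rintro ⟨hk', hm'⟩
    have hv : M *ᵥ ![(M 0 0)⁻¹ * (M 2 3 * M 0 2 - M 2 2 * M 0 3), 0, -(M 2 3), M 2 2] = 0 := by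
      funext i
      fin_cases i <;> (simp [key, h10, h20, h30, hg, hi, hk', hm']; (try field_simp); (try ring))
    have h1 := hker _ hv
    have h2 := congrFun h1 3
    simpa using hh h2
  -- group B : the image of the line at infinity
  have pB0 : cayleyF ![M 0 3, M 1 3, M 2 3, M 3 3] = 0 := by
    have h := (hF ![0,0,0,1] (fun hp => one_ne_zero (congrFun hp 3))).mp (by decide)
    rw [key] at h
    simpa using h
  have pB1 : cayleyF ![M 0 2 + M 0 3, M 1 3, M 2 2 + M 2 3, M 3 3] = 0 := by
    have h := (hF ![0,0,1,1] (fun hp => one_ne_zero (congrFun hp 2))).mp (by decide)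
    rw [key] at h
    simpa [hg, hi] using h
  have pB2 : cayleyF ![M 0 2 + M 0 3 * 2, M 1 3 * 2, M 2 2 + M 2 3 * 2, M 3 3 * 2] = 0 := by
    have h := (hF ![0,0,1,2] (fun hp => one_ne_zero (congrFun hp 2))).mp (by decide)
    rw [key] at h
    simpa [hg, hi] using h
  obtain ⟨he, hj, hk⟩ := lemB (M 0 2) (M 2 2) (M 0 3) (M 1 3) (M 2 3) (M 3 3)
    ⟨hh, hkm, pB0, pB1, pB2⟩
  -- M 3 3 ≠ 0
  have hm : M 3 3 ≠ 0 := by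
    intro hm0
    have hv : M *ᵥ ![0, 0, M 2 3, -(M 2 2)] = 0 := by
      funext i
      fin_cases i <;> (simp [key, h10, h20, h30, hg, hi, he, hj, hk, hm0]; (try ring))
    have h1 := hker _ hv
    have h2 := congrFun h1 3
    simp only [Matrix.cons_val_three, Matrix.tail_cons, Matrix.head_cons, Pi.zero_apply,
      neg_eq_zero] at h2
    exact hh h2
  -- the second column is off the surface
  have eq1 : M *ᵥ ![0,1,0,0] = ![M 0 1, M 1 1, M 2 1, M 3 1] := by
    funext i; fin_cases i <;> simp [key]
  have pC : ¬ cayleyF ![M 0 1, M 1 1, M 2 1, M 3 1] = 0 := by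
    rw [← eq1]
    intro hc
    have h2 := (hF ![0,1,0,0] (fun hp => one_ne_zero (congrFun hp 1))).mpr hc
    revert h2; decide
  -- the two affine line families
  have pD : ∀ s : ZMod 3, cayleyF ![M 0 0 + M 0 1, M 1 1,
      M 2 1 + M 2 2 * s + M 2 3 * (s - 1), M 3 1 + M 3 3 * (s - 1)] = 0 := by
    intro s
    have h := (hF ![1,1,s,s-1] (fun hp => one_ne_zero (congrFun hp 0))).mp
      (by revert s; decide)
    rw [key] at h
    simpa [h10, h20, h30, hg, hi, he, hj, hk] using h
  have pE : ∀ s : ZMod 3, cayleyF ![M 0 0 + M 0 1 * 2, M 1 1 * 2,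
      M 2 1 * 2 + M 2 2 * s + M 2 3 * (s * 2 + 1), M 3 1 * 2 + M 3 3 * (s * 2 + 1)] = 0 := by
    intro s
    have h := (hF ![1,2,s,s*2+1] (fun hp => one_ne_zero (congrFun hp 0))).mp
      (by revert s; decide)
    rw [key] at h
    simpa [h10, h20, h30, hg, hi, he, hj, hk] using h
  obtain ⟨lam, hlam, hor⟩ := lemC (M 0 0) (M 0 1) (M 1 1) (M 2 1) (M 3 1) (M 2 2) (M 2 3) (M 3 3)
    ⟨ht0, hh, hm, pC, pD, pE⟩
  have hMeq : M = !![M 0 0, M 0 1, 0, 0; 0, M 1 1, 0, 0;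
      0, M 2 1, M 2 2, M 2 3; 0, M 3 1, 0, M 3 3] := by
    conv_lhs => rw [eta4 M]
    rw [h10, h20, h30, hg, hi, he, hj, hk]
  rw [hMeq]
  exact ⟨lam, hlam, hor⟩


section Transfer

variable {A B : Type*} [Field A] [Field B]

lemma mapF (e : A ≃+* B) (p : Fin 4 → A) : cayleyF (⇑e ∘ p) = e (cayleyF p) := by
  simp [cayleyF, _root_.map_mul, _root_.map_sub, _root_.map_pow, Function.comp]

lemma mapMulVec (e : A ≃+* B) (M : Matrix (Fin 4) (Fin 4) A) (v : Fin 4 → A) :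
    (M.map ⇑e) *ᵥ (⇑e ∘ v) = ⇑e ∘ (M *ᵥ v) := by
  funext i
  simp [Matrix.mulVec, dotProduct, Matrix.map_apply, _root_.map_sum, _root_.map_mul, Function.comp]

lemma map_map_cancel {α β : Type*} (f : α → β) (g : β → α) (h : ∀ x, g (f x) = x)
    (M : Matrix (Fin 4) (Fin 4) α) : (M.map f).map g = M := by
  ext i j; simp [Matrix.map_apply, h]

lemma mapSmul (e : A ≃+* B) (l : A) (X : Matrix (Fin 4) (Fin 4) A) :
    (l • X).map ⇑e = e l • X.map ⇑e := by
  ext i j; simp [Matrix.map_apply, _root_.map_mul]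

lemma mapDiag (e : A ≃+* B) (c : A) :
    (Matrix.diagonal ![1, c, c^2, c^3]).map ⇑e
      = Matrix.diagonal ![1, e c, (e c)^2, (e c)^3] := by
  ext i j
  fin_cases i <;> fin_cases j <;>
    simp [Matrix.map_apply, Matrix.diagonal_apply, _root_.map_pow]

lemma mapN (e : A ≃+* B) (c : A) : (cayleyN c).map ⇑e = cayleyN (e c) := by
  ext i j
  fin_cases i <;> fin_cases j <;>
    simp [cayleyN, Matrix.map_apply, Matrix.vecHead, Matrix.vecTail,
      _root_.map_ofNat, _root_.map_mul]

lemma unit_transfer (e : A ≃+* B) (M : Matrix (Fin 4) (Fin 4) A) (h : IsUnit M) :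
    IsUnit (M.map ⇑e) := by
  let phi : Matrix (Fin 4) (Fin 4) A →+* Matrix (Fin 4) (Fin 4) B :=
    RingHom.mapMatrix (e : A →+* B)
  have h2 := h.map phi
  simpa [phi, RingHom.mapMatrix_apply] using h2

lemma t_transfer (e : A ≃+* B) (M : Matrix (Fin 4) (Fin 4) A)
    (h : ∃ t : A, M *ᵥ ![1,0,0,0] = t • ![1,0,0,0]) :
    ∃ t' : B, (M.map ⇑e) *ᵥ ![1,0,0,0] = t' • ![1,0,0,0] := by
  obtain ⟨t, ht⟩ := h
  have h1 : (⇑e ∘ (![1,0,0,0] : Fin 4 → A)) = ![1,0,0,0] := by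
    funext i; fin_cases i <;> simp
  refine ⟨e t, ?_⟩
  calc (M.map ⇑e) *ᵥ ![1,0,0,0] = (M.map ⇑e) *ᵥ (⇑e ∘ ![1,0,0,0]) := by rw [h1]
    _ = ⇑e ∘ (M *ᵥ ![1,0,0,0]) := mapMulVec e M _
    _ = ⇑e ∘ (t • ![1,0,0,0]) := by rw [ht]
    _ = e t • ![1,0,0,0] := by funext i; fin_cases i <;> simp

lemma iff_transfer (e : A ≃+* B) (M : Matrix (Fin 4) (Fin 4) A)
    (h : ∀ p : Fin 4 → A, p ≠ 0 → (cayleyF p = 0 ↔ cayleyF (M *ᵥ p) = 0)) :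
    ∀ q : Fin 4 → B, q ≠ 0 → (cayleyF q = 0 ↔ cayleyF ((M.map ⇑e) *ᵥ q) = 0) := by
  intro q hq
  set p : Fin 4 → A := ⇑e.symm ∘ q with hp
  have hq' : q = ⇑e ∘ p := by
    funext i; simp [hp, Function.comp]
  have hp0 : p ≠ 0 := by
    intro h0
    apply hq
    rw [hq', h0]
    funext i; simp
  calc cayleyF q = 0 ↔ e (cayleyF p) = 0 := by rw [hq', mapF]
    _ ↔ cayleyF p = 0 := map_eq_zero_iff e e.injective
    _ ↔ cayleyF (M *ᵥ p) = 0 := h p hp0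
    _ ↔ e (cayleyF (M *ᵥ p)) = 0 := (map_eq_zero_iff e e.injective).symm
    _ ↔ cayleyF (⇑e ∘ (M *ᵥ p)) = 0 := by rw [mapF]
    _ ↔ cayleyF ((M.map ⇑e) *ᵥ q) = 0 := by rw [hq', mapMulVec]

end Transfer

end CayleyAux

theorem stmt_6 {K : Type*} [Field K] (hK : Nat.card K = 3) :
    (∀ M : Matrix (Fin 4) (Fin 4) K, IsUnit M →
      (∃ t : K, M *ᵥ ![1,0,0,0] = t • ![1,0,0,0]) →
      (∀ p : Fin 4 → K, p ≠ 0 → (cayleyF p = 0 ↔ cayleyF (M *ᵥ p) = 0)) →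
      ∃ lam : K, lam ≠ 0 ∧
        ((∃ c : K, c ≠ 0 ∧ M = lam • Matrix.diagonal ![1, c, c^2, c^3]) ∨
         (∃ c : K, c ≠ 0 ∧ M = lam • cayleyN c))) ∧
    (∀ c : K, c ≠ 0 →
      (IsUnit (Matrix.diagonal ![1, c, c^2, c^3] : Matrix (Fin 4) (Fin 4) K) ∧
        (∃ t : K, (Matrix.diagonal ![1, c, c^2, c^3] : Matrix (Fin 4) (Fin 4) K) *ᵥ ![1,0,0,0]
            = t • ![1,0,0,0]) ∧
        (∀ p : Fin 4 → K, p ≠ 0 →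
          (cayleyF p = 0 ↔ cayleyF ((Matrix.diagonal ![1, c, c^2, c^3] : Matrix (Fin 4) (Fin 4) K) *ᵥ p) = 0))) ∧
      (IsUnit (cayleyN c) ∧
        (∃ t : K, cayleyN c *ᵥ ![1,0,0,0] = t • ![1,0,0,0]) ∧
        (∀ p : Fin 4 → K, p ≠ 0 → (cayleyF p = 0 ↔ cayleyF (cayleyN c *ᵥ p) = 0)))) := by
  classical
  have hfin : Finite K := Nat.finite_of_card_ne_zero (by rw [hK]; omega)
  cases nonempty_fintype K
  have hcard : Fintype.card K = 3 := by rw [← Nat.card_eq_fintype_card, hK]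
  let e : K ≃+* ZMod 3 := (ZMod.ringEquivOfPrime K (by norm_num) hcard).symm
  constructor
  · -- main direction
    intro M hU hT hF
    obtain ⟨lam', hlam', hor⟩ := CayleyAux.zmod_main (M.map ⇑e)
      (CayleyAux.unit_transfer e M hU) (CayleyAux.t_transfer e M hT)
      (CayleyAux.iff_transfer e M hF)
    have hlam : e.symm lam' ≠ 0 := by
      intro h0
      apply hlam'
      have := congrArg ⇑e h0
      simpa using this
    have hMcan : (M.map ⇑e).map ⇑e.symm = M :=
      CayleyAux.map_map_cancel ⇑e ⇑e.symm e.symm_apply_apply M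
    refine ⟨e.symm lam', hlam, ?_⟩
    rcases hor with ⟨c', hc', hMeq⟩ | ⟨c', hc', hMeq⟩
    · refine Or.inl ⟨e.symm c', ?_, ?_⟩
      · intro h0
        apply hc'
        have := congrArg ⇑e h0
        simpa using this
      · rw [← hMcan, hMeq, CayleyAux.mapSmul, CayleyAux.mapDiag]
    · refine Or.inr ⟨e.symm c', ?_, ?_⟩
      · intro h0
        apply hc'
        have := congrArg ⇑e h0
        simpa using this
      · rw [← hMcan, hMeq, CayleyAux.mapSmul, CayleyAux.mapN]
  · -- converse direction
    intro c hc
    have hc' : e c ≠ 0 := by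
      intro h0
      apply hc
      have := congrArg ⇑e.symm h0
      simpa using this
    obtain ⟨hT1, hP1, hT2, hP2⟩ := CayleyAux.lemD3 (e c) hc'
    have hU1 : IsUnit (Matrix.diagonal ![1, e c, (e c)^2, (e c)^3]) := by
      have h1 := CayleyAux.lemD1 (e c) hc'
      exact (Matrix.isUnit_iff_isUnit_det _).mpr (Matrix.isUnit_det_of_right_inverse h1)
    have hU2 : IsUnit (cayleyN (e c)) := by
      have h1 := CayleyAux.lemD2 (e c) hc'
      exact (Matrix.isUnit_iff_isUnit_det _).mpr (Matrix.isUnit_det_of_right_inverse h1)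
    have hdiag : (Matrix.diagonal ![1, e c, (e c)^2, (e c)^3]).map ⇑e.symm
        = (Matrix.diagonal ![1, c, c^2, c^3] : Matrix (Fin 4) (Fin 4) K) := by
      rw [CayleyAux.mapDiag, e.symm_apply_apply]
    have hNc : (cayleyN (e c)).map ⇑e.symm = cayleyN c := by
      rw [CayleyAux.mapN, e.symm_apply_apply]
    refine ⟨⟨?_, ?_, ?_⟩, ?_, ?_, ?_⟩
    · have := CayleyAux.unit_transfer e.symm _ hU1
      rwa [hdiag] at this
    · obtain ⟨t', ht'⟩ := CayleyAux.t_transfer e.symm _ hT1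
      rw [hdiag] at ht'
      exact ⟨t', ht'⟩
    · have := CayleyAux.iff_transfer e.symm _ hP1
      rwa [hdiag] at this
    · have := CayleyAux.unit_transfer e.symm _ hU2
      rwa [hNc] at this
    · obtain ⟨t', ht'⟩ := CayleyAux.t_transfer e.symm _ hT2
      rw [hNc] at ht'
      exact ⟨t', ht'⟩
    · have := CayleyAux.iff_transfer e.symm _ hP2
      rwa [hNc] at this
end

section
/- Let K be a commutative field and f(X₀,X₁,X₂,X₃) = X₀X₁X₂ − X₁³ − X₀²X₃, whose four formal partial derivatives evaluated at p = (p₀,p₁,p₂,p₃) ∈ K⁴ are p₁p₂ − 2p₀p₃, p₀p₂ − 3p₁², p₀p₁, and −p₀². For a nonzero p ∈ K⁴, all four partial derivatives vanish simultaneously at p if and only if either (p₀ = 0 and p₁ = 0), or (p₀ = 0, p₂ = 0 and the characteristic of K is 3). In particular, the singular points of the Cayley surface F with respect to f are exactly the points of the line g∞ = {Kp : p₀ = p₁ = 0}. -/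
private lemma stmt_8_aux {K : Type*} [Field K] (p : Fin 4 → K) :
    (p 1 * p 2 - 2 * p 0 * p 3 = 0 ∧ p 0 * p 2 - 3 * (p 1)^2 = 0 ∧
        p 0 * p 1 = 0 ∧ -((p 0)^2) = 0) ↔
      ((p 0 = 0 ∧ p 1 = 0) ∨ (p 0 = 0 ∧ p 2 = 0 ∧ ringChar K = 3)) := by
  constructor
  · rintro ⟨h1, h2, h3, h4⟩
    have h0 : p 0 = 0 := by
      have := neg_eq_zero.mp h4
      exact pow_eq_zero_iff (n := 2) (by norm_num) |>.mp this
    rw [h0] at h1 h2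
    simp only [mul_zero, zero_mul, sub_zero, zero_sub, neg_eq_zero] at h1 h2
    by_cases hp1 : p 1 = 0
    · exact Or.inl ⟨h0, hp1⟩
    · have h3ne : (3 : K) = 0 := by
        rcases mul_eq_zero.mp h2 with h | h
        · exact h
        · exact absurd (pow_eq_zero_iff (n := 2) (by norm_num) |>.mp h) hp1
      have hchar : ringChar K = 3 :=
        CharP.ringChar_of_prime_eq_zero (by norm_num) (by exact_mod_cast h3ne)
      have hp2 : p 2 = 0 := by
        rcases mul_eq_zero.mp h1 with h | h
        · exact absurd h hp1
        · exact h
      exact Or.inr ⟨h0, hp2, hchar⟩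
  · rintro (⟨h0, h1⟩ | ⟨h0, h2, hchar⟩)
    · rw [h0, h1]; ring_nf; simp
    · have h3 : (3 : K) = 0 := by
        have := (ringChar.spec K 3).mpr (hchar ▸ dvd_refl _)
        exact_mod_cast this
      rw [h0, h2, h3]; ring_nf; simp

theorem stmt_8 {K : Type*} [Field K] :
    (∀ p : Fin 4 → K, p ≠ 0 →
      ((p 1 * p 2 - 2 * p 0 * p 3 = 0 ∧ p 0 * p 2 - 3 * (p 1)^2 = 0 ∧
          p 0 * p 1 = 0 ∧ -((p 0)^2) = 0) ↔
        ((p 0 = 0 ∧ p 1 = 0) ∨ (p 0 = 0 ∧ p 2 = 0 ∧ ringChar K = 3)))) ∧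
    (∀ p : Fin 4 → K, p ≠ 0 → cayleyF p = 0 →
      ((p 1 * p 2 - 2 * p 0 * p 3 = 0 ∧ p 0 * p 2 - 3 * (p 1)^2 = 0 ∧
          p 0 * p 1 = 0 ∧ -((p 0)^2) = 0) ↔
        (p 0 = 0 ∧ p 1 = 0))) := by
  constructor
  · intro p _; exact stmt_8_aux p
  · intro p _ hf
    rw [stmt_8_aux p]
    constructor
    · rintro (h | ⟨h0, h2, _⟩)
      · exact h
      · refine ⟨h0, ?_⟩
        unfold cayleyF at hf
        rw [h0, h2] at hf
        simp only [zero_mul, mul_zero, zero_sub, ne_eq, OfNat.ofNat_ne_zero,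
          not_false_eq_true, zero_pow, sub_zero, neg_eq_zero] at hf
        exact pow_eq_zero_iff (n := 3) (by norm_num) |>.mp hf
    · exact Or.inl
end

section
/- Let K be a commutative field and let (a₀,a₁,a₂,a₃) ∈ K⁴ be nonzero. The plane τ = {Kp ∈ ℙ₃(K) : a₀p₀ + a₁p₁ + a₂p₂ + a₃p₃ = 0} contains a generator of the Cayley surface F (i.e., contains the line g∞ spanned by (0,0,1,0),(0,0,0,1), or a line g(1,s) spanned by (1,s,s²,0),(0,0,1,s) for some s ∈ K) if and only if a₀a₃² − a₁a₂a₃ + a₂³ = 0. -/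
lemma span_two_vanish {K : Type*} [Field K] (a v w : Fin 4 → K) :
    (∀ p ∈ Submodule.span K ({v, w} : Set (Fin 4 → K)),
        a 0 * p 0 + a 1 * p 1 + a 2 * p 2 + a 3 * p 3 = 0) ↔
    (a 0 * v 0 + a 1 * v 1 + a 2 * v 2 + a 3 * v 3 = 0 ∧
     a 0 * w 0 + a 1 * w 1 + a 2 * w 2 + a 3 * w 3 = 0) := by
  constructor
  · intro h
    exact ⟨h v (Submodule.subset_span (by simp)),
           h w (Submodule.subset_span (by simp))⟩
  · rintro ⟨hv, hw⟩ p hp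
    induction hp using Submodule.span_induction with
    | mem x hx =>
      rcases hx with hx | hx
      · subst hx; exact hv
      · simp only [Set.mem_singleton_iff] at hx; subst hx; exact hw
    | zero => simp
    | add x y _ _ hx hy =>
      simp only [Pi.add_apply]
      linear_combination hx + hy
    | smul c x _ hx =>
      simp only [Pi.smul_apply, smul_eq_mul]
      linear_combination c * hx

theorem stmt_9 {K : Type*} [Field K] (a : Fin 4 → K) (ha : a ≠ 0) :
    ((∀ p ∈ Submodule.span K ({![0,0,1,0], ![0,0,0,1]} : Set (Fin 4 → K)),
        a 0 * p 0 + a 1 * p 1 + a 2 * p 2 + a 3 * p 3 = 0) ∨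
      (∃ s : K, ∀ p ∈ Submodule.span K ({![1,s,s^2,0], ![0,0,1,s]} : Set (Fin 4 → K)),
        a 0 * p 0 + a 1 * p 1 + a 2 * p 2 + a 3 * p 3 = 0)) ↔
    a 0 * (a 3)^2 - a 1 * a 2 * a 3 + (a 2)^3 = 0 := by
  simp only [span_two_vanish]
  simp only [Matrix.cons_val_zero, Matrix.cons_val_one, Matrix.head_cons,
    Matrix.cons_val_two, Matrix.tail_cons, Matrix.cons_val_three]
  constructor
  · rintro (⟨h1, h2⟩ | ⟨s, h1, h2⟩)
    · -- a 2 = 0, a 3 = 0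
      have h2' : a 2 = 0 := by linear_combination h1
      have h3' : a 3 = 0 := by linear_combination h2
      rw [h2', h3']; ring
    · -- a 0 + a 1 s + a 2 s^2 = 0, a 2 + a 3 s = 0
      linear_combination (a 3)^2 * h1 + (a 2 * (a 2 - a 3 * s) - a 1 * a 3) * h2
  · intro h
    by_cases h3 : a 3 = 0
    · left
      have h2 : a 2 = 0 := by
        have : (a 2)^3 = 0 := by linear_combination h + (a 1 * a 2 - a 0 * a 3) * h3
        exact pow_eq_zero_iff (by norm_num) |>.mp this
      constructor <;> (rw [h2, h3]; ring)
    · right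
      refine ⟨-(a 2 / a 3), ?_, ?_⟩
      · field_simp
        linear_combination h
      · field_simp
        ring
end

section
/- Let K be a commutative field with at least 4 elements, and let p be a homogeneous polynomial of degree 3 in K[X₀,X₁,X₂,X₃] such that for every nonzero x ∈ K⁴ one has p(x) = 0 if and only if f(x) = 0, where f = X₀X₁X₂ − X₁³ − X₀²X₃. Then there exists λ ∈ K \ {0} such that p = λ·f as polynomials. -/
open MvPolynomial

open MvPolynomial

noncomputable def ca10e (i j k l : ℕ) : Fin 4 →₀ ℕ :=
  Finsupp.single 0 i + Finsupp.single 1 j + Finsupp.single 2 k + Finsupp.single 3 l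

lemma ca10e_inj {i j k l i' j' k' l' : ℕ} :
    ca10e i j k l = ca10e i' j' k' l' ↔ (i = i' ∧ j = j' ∧ k = k' ∧ l = l') := by
  constructor
  · intro hh
    refine ⟨?_, ?_, ?_, ?_⟩
    · have := congrArg (fun m => m 0) hh
      simpa [ca10e, Finsupp.single_apply] using this
    · have := congrArg (fun m => m 1) hh
      simpa [ca10e, Finsupp.single_apply] using this
    · have := congrArg (fun m => m 2) hh
      simpa [ca10e, Finsupp.single_apply] using this
    · have := congrArg (fun m => m 3) hh
      simpa [ca10e, Finsupp.single_apply] using this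
  · rintro ⟨rfl, rfl, rfl, rfl⟩; rfl

lemma ca10e_eq_self (m : Fin 4 →₀ ℕ) : m = ca10e (m 0) (m 1) (m 2) (m 3) := by
  ext t
  fin_cases t <;> simp [ca10e, Finsupp.single_apply]

lemma ca10_degree_e (i j k l : ℕ) : (ca10e i j k l).degree = i + j + k + l := by
  rw [Finsupp.degree_apply, Finset.sum_subset (Finset.subset_univ _)]
  · simp [Fin.sum_univ_four, ca10e, Finsupp.single_apply]
  · intro x _ hx
    simpa using hx

lemma ca10_term_eq {K : Type*} [CommRing K] (i j k l : ℕ) (c : K) :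
    (C c * X 0 ^ i * X 1 ^ j * X 2 ^ k * X 3 ^ l : MvPolynomial (Fin 4) K) =
      monomial (ca10e i j k l) c := by
  simp [ca10e, X_pow_eq_monomial, monomial_mul, C_mul_monomial]

set_option maxHeartbeats 2000000 in
lemma ca10_rep {K : Type*} [CommRing K] (p : MvPolynomial (Fin 4) K)
    (hp : p.IsHomogeneous 3) :
    p =
      C (coeff (ca10e 3 0 0 0) p) * X 0 ^ 3 * X 1 ^ 0 * X 2 ^ 0 * X 3 ^ 0 +
      C (coeff (ca10e 2 1 0 0) p) * X 0 ^ 2 * X 1 ^ 1 * X 2 ^ 0 * X 3 ^ 0 +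
      C (coeff (ca10e 2 0 1 0) p) * X 0 ^ 2 * X 1 ^ 0 * X 2 ^ 1 * X 3 ^ 0 +
      C (coeff (ca10e 2 0 0 1) p) * X 0 ^ 2 * X 1 ^ 0 * X 2 ^ 0 * X 3 ^ 1 +
      C (coeff (ca10e 1 2 0 0) p) * X 0 ^ 1 * X 1 ^ 2 * X 2 ^ 0 * X 3 ^ 0 +
      C (coeff (ca10e 1 1 1 0) p) * X 0 ^ 1 * X 1 ^ 1 * X 2 ^ 1 * X 3 ^ 0 +
      C (coeff (ca10e 1 1 0 1) p) * X 0 ^ 1 * X 1 ^ 1 * X 2 ^ 0 * X 3 ^ 1 +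
      C (coeff (ca10e 1 0 2 0) p) * X 0 ^ 1 * X 1 ^ 0 * X 2 ^ 2 * X 3 ^ 0 +
      C (coeff (ca10e 1 0 1 1) p) * X 0 ^ 1 * X 1 ^ 0 * X 2 ^ 1 * X 3 ^ 1 +
      C (coeff (ca10e 1 0 0 2) p) * X 0 ^ 1 * X 1 ^ 0 * X 2 ^ 0 * X 3 ^ 2 +
      C (coeff (ca10e 0 3 0 0) p) * X 0 ^ 0 * X 1 ^ 3 * X 2 ^ 0 * X 3 ^ 0 +
      C (coeff (ca10e 0 2 1 0) p) * X 0 ^ 0 * X 1 ^ 2 * X 2 ^ 1 * X 3 ^ 0 +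
      C (coeff (ca10e 0 2 0 1) p) * X 0 ^ 0 * X 1 ^ 2 * X 2 ^ 0 * X 3 ^ 1 +
      C (coeff (ca10e 0 1 2 0) p) * X 0 ^ 0 * X 1 ^ 1 * X 2 ^ 2 * X 3 ^ 0 +
      C (coeff (ca10e 0 1 1 1) p) * X 0 ^ 0 * X 1 ^ 1 * X 2 ^ 1 * X 3 ^ 1 +
      C (coeff (ca10e 0 1 0 2) p) * X 0 ^ 0 * X 1 ^ 1 * X 2 ^ 0 * X 3 ^ 2 +
      C (coeff (ca10e 0 0 3 0) p) * X 0 ^ 0 * X 1 ^ 0 * X 2 ^ 3 * X 3 ^ 0 +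
      C (coeff (ca10e 0 0 2 1) p) * X 0 ^ 0 * X 1 ^ 0 * X 2 ^ 2 * X 3 ^ 1 +
      C (coeff (ca10e 0 0 1 2) p) * X 0 ^ 0 * X 1 ^ 0 * X 2 ^ 1 * X 3 ^ 2 +
      C (coeff (ca10e 0 0 0 3) p) * X 0 ^ 0 * X 1 ^ 0 * X 2 ^ 0 * X 3 ^ 3 := by
  refine MvPolynomial.ext _ _ fun m => ?_
  obtain ⟨a, b, c, d, rfl⟩ : ∃ a b c d, m = ca10e a b c d :=
    ⟨_, _, _, _, ca10e_eq_self m⟩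
  simp only [ca10_term_eq, coeff_add, coeff_monomial]
  by_cases hdeg : a + b + c + d = 3
  · have ha : a ≤ 3 := by omega
    have hb : b ≤ 3 := by omega
    have hc : c ≤ 3 := by omega
    have hd : d ≤ 3 := by omega
    interval_cases a <;> interval_cases b <;> interval_cases c <;> interval_cases d <;>
      first
      | omega
      | (simp only [ca10e_inj]; norm_num)
  · have hz : ∀ i j k l : ℕ, i + j + k + l = 3 → ∀ z : K,
        (if ca10e i j k l = ca10e a b c d then z else 0) = 0 := by
      intro i j k l hs z
      refine if_neg fun hcon => ?_
      obtain ⟨h1, h2, h3, h4⟩ := ca10e_inj.mp hcon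
      omega
    rw [hp.coeff_eq_zero (by rw [ca10_degree_e]; omega)]
    rw [hz 3 0 0 0 (by norm_num), hz 2 1 0 0 (by norm_num), hz 2 0 1 0 (by norm_num), hz 2 0 0 1 (by norm_num), hz 1 2 0 0 (by norm_num), hz 1 1 1 0 (by norm_num), hz 1 1 0 1 (by norm_num), hz 1 0 2 0 (by norm_num), hz 1 0 1 1 (by norm_num), hz 1 0 0 2 (by norm_num), hz 0 3 0 0 (by norm_num), hz 0 2 1 0 (by norm_num), hz 0 2 0 1 (by norm_num), hz 0 1 2 0 (by norm_num), hz 0 1 1 1 (by norm_num), hz 0 1 0 2 (by norm_num), hz 0 0 3 0 (by norm_num), hz 0 0 2 1 (by norm_num), hz 0 0 1 2 (by norm_num), hz 0 0 0 3 (by norm_num)]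
    norm_num



lemma ca10_vand {K : Type*} [Field K] {n : ℕ} (s : Finset K) (hn : n ≤ s.card)
    (d : Fin n → K) (h : ∀ x ∈ s, ∑ i : Fin n, d i * x ^ (i : ℕ) = 0) :
    ∀ i, d i = 0 := by
  intro i
  set P : Polynomial K := ∑ i : Fin n, Polynomial.C (d i) * Polynomial.X ^ (i : ℕ) with hP
  have hdeg : P.natDegree < n := by
    rcases n with _ | m
    · exact absurd i.isLt (by omega)
    · have : P.natDegree ≤ m := by
        refine Polynomial.natDegree_sum_le_of_forall_le _ _ fun j _ => ?_
        calc (Polynomial.C (d j) * Polynomial.X ^ (j : ℕ)).natDegree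
            ≤ (j : ℕ) := Polynomial.natDegree_C_mul_X_pow_le _ _
          _ ≤ m := by omega
      omega
  have hzero : P = 0 := by
    refine Polynomial.eq_zero_of_natDegree_lt_card_of_eval_eq_zero' P s (fun x hx => ?_)
      (lt_of_lt_of_le hdeg hn)
    rw [hP]
    simpa [Polynomial.eval_finset_sum] using h x hx
  have : P.coeff i = d i := by
    rw [hP]
    rw [Polynomial.finset_sum_coeff]
    rw [Finset.sum_eq_single i]
    · simp
    · intro j _ hj
      simp [Polynomial.coeff_C_mul, Polynomial.coeff_X_pow]
      intro hc
      exact absurd (Fin.ext hc.symm) hj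
    · simp
  rw [← this, hzero, Polynomial.coeff_zero]

lemma ca10_vand4 {K : Type*} [Field K] (s : Finset K) (hs : 4 ≤ s.card) (d0 d1 d2 d3 : K)
    (h : ∀ x ∈ s, d0 + d1*x + d2*x^2 + d3*x^3 = 0) : d0 = 0 ∧ d1 = 0 ∧ d2 = 0 ∧ d3 = 0 := by
  have h' : ∀ x ∈ s, ∑ i : Fin 4, (![d0,d1,d2,d3]) i * x ^ (i : ℕ) = 0 := by
    intro x hx
    rw [Fin.sum_univ_four]
    show d0 * x ^ 0 + d1 * x ^ 1 + d2 * x ^ 2 + d3 * x ^ 3 = 0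
    linear_combination h x hx
  have hres := ca10_vand s hs _ h'
  exact ⟨hres 0, hres 1, hres 2, hres 3⟩

lemma ca10_vand5 {K : Type*} [Field K] (s : Finset K) (hs : 5 ≤ s.card) (d0 d1 d2 d3 d4 : K)
    (h : ∀ x ∈ s, d0 + d1*x + d2*x^2 + d3*x^3 + d4*x^4 = 0) :
    d0 = 0 ∧ d1 = 0 ∧ d2 = 0 ∧ d3 = 0 ∧ d4 = 0 := by
  have h' : ∀ x ∈ s, ∑ i : Fin 5, (![d0,d1,d2,d3,d4]) i * x ^ (i : ℕ) = 0 := by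
    intro x hx
    rw [Fin.sum_univ_five]
    show d0 * x ^ 0 + d1 * x ^ 1 + d2 * x ^ 2 + d3 * x ^ 3 + d4 * x ^ 4 = 0
    linear_combination h x hx
  have hres := ca10_vand s hs _ h'
  exact ⟨hres 0, hres 1, hres 2, hres 3, hres 4⟩

lemma ca10_vand6 {K : Type*} [Field K] (s : Finset K) (hs : 6 ≤ s.card) (d0 d1 d2 d3 d4 d5 : K)
    (h : ∀ x ∈ s, d0 + d1*x + d2*x^2 + d3*x^3 + d4*x^4 + d5*x^5 = 0) :
    d0 = 0 ∧ d1 = 0 ∧ d2 = 0 ∧ d3 = 0 ∧ d4 = 0 ∧ d5 = 0 := by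
  have h' : ∀ x ∈ s, ∑ i : Fin 6, (![d0,d1,d2,d3,d4,d5]) i * x ^ (i : ℕ) = 0 := by
    intro x hx
    rw [Fin.sum_univ_six]
    show d0 * x ^ 0 + d1 * x ^ 1 + d2 * x ^ 2 + d3 * x ^ 3 + d4 * x ^ 4 + d5 * x ^ 5 = 0
    linear_combination h x hx
  have hres := ca10_vand s hs _ h'
  exact ⟨hres 0, hres 1, hres 2, hres 3, hres 4, hres 5⟩

set_option maxHeartbeats 1600000 in
theorem stmt_10 {K : Type*} [Field K] (hK : (4 : Cardinal) ≤ Cardinal.mk K)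
    (p : MvPolynomial (Fin 4) K) (hp : p.IsHomogeneous 3)
    (h : ∀ x : Fin 4 → K, x ≠ 0 →
      (eval x p = 0 ↔ eval x (X 0 * X 1 * X 2 - X 1 ^ 3 - X 0 ^ 2 * X 3 :
          MvPolynomial (Fin 4) K) = 0)) :
    ∃ lam : K, lam ≠ 0 ∧
      p = C lam * (X 0 * X 1 * X 2 - X 1 ^ 3 - X 0 ^ 2 * X 3) := by
  classical
  have hrep := ca10_rep p hp
  set c3000 := MvPolynomial.coeff (ca10e 3 0 0 0) p with hdc3000
  set c2100 := MvPolynomial.coeff (ca10e 2 1 0 0) p with hdc2100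
  set c2010 := MvPolynomial.coeff (ca10e 2 0 1 0) p with hdc2010
  set c2001 := MvPolynomial.coeff (ca10e 2 0 0 1) p with hdc2001
  set c1200 := MvPolynomial.coeff (ca10e 1 2 0 0) p with hdc1200
  set c1110 := MvPolynomial.coeff (ca10e 1 1 1 0) p with hdc1110
  set c1101 := MvPolynomial.coeff (ca10e 1 1 0 1) p with hdc1101
  set c1020 := MvPolynomial.coeff (ca10e 1 0 2 0) p with hdc1020
  set c1011 := MvPolynomial.coeff (ca10e 1 0 1 1) p with hdc1011
  set c1002 := MvPolynomial.coeff (ca10e 1 0 0 2) p with hdc1002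
  set c0300 := MvPolynomial.coeff (ca10e 0 3 0 0) p with hdc0300
  set c0210 := MvPolynomial.coeff (ca10e 0 2 1 0) p with hdc0210
  set c0201 := MvPolynomial.coeff (ca10e 0 2 0 1) p with hdc0201
  set c0120 := MvPolynomial.coeff (ca10e 0 1 2 0) p with hdc0120
  set c0111 := MvPolynomial.coeff (ca10e 0 1 1 1) p with hdc0111
  set c0102 := MvPolynomial.coeff (ca10e 0 1 0 2) p with hdc0102
  set c0030 := MvPolynomial.coeff (ca10e 0 0 3 0) p with hdc0030
  set c0021 := MvPolynomial.coeff (ca10e 0 0 2 1) p with hdc0021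
  set c0012 := MvPolynomial.coeff (ca10e 0 0 1 2) p with hdc0012
  set c0003 := MvPolynomial.coeff (ca10e 0 0 0 3) p with hdc0003
  clear_value c3000 c2100 c2010 c2001 c1200 c1110 c1101 c1020 c1011 c1002 c0300 c0210 c0201 c0120 c0111 c0102 c0030 c0021 c0012 c0003
  have hEv : ∀ a b : K,
      (c3000 + c2100*a + c1200*a^2 + (c0300 - c2001)*a^3 - c1101*a^4 - c0201*a^5 + c1002*a^6 + c0102*a^7 - c0003*a^9)
      + (c2010 + (c1110 + c2001)*a + (c0210 + c1101)*a^2 + (c0201 - c1011)*a^3 + (-c0111 - 2*c1002)*a^4 - 2*c0102*a^5 + c0012*a^6 + 3*c0003*a^7) * b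
      + (c1020 + (c0120 + c1011)*a + (c0111 + c1002)*a^2 + (-c0021 + c0102)*a^3 - 2*c0012*a^4 - 3*c0003*a^5) * b^2
      + (c0030 + c0021*a + c0012*a^2 + c0003*a^3) * b^3 = 0 := by
    intro a b
    have hne : (![(1:K), a, b, a*b - a^3] : Fin 4 → K) ≠ 0 := fun hcon => by
      simpa using congrFun hcon 0
    have hp0 : MvPolynomial.eval ![(1:K), a, b, a*b - a^3] p = 0 := by
      refine (h _ hne).mpr ?_
      simp only [map_sub, map_mul, map_pow, eval_X, Matrix.cons_val_zero,
        Matrix.cons_val_one, Matrix.head_cons, Matrix.cons_val_two, Matrix.tail_cons,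
        Matrix.cons_val_three]
      ring
    rw [hrep] at hp0
    simp only [map_add, map_mul, map_pow, eval_C, eval_X, Matrix.cons_val_zero,
        Matrix.cons_val_one, Matrix.head_cons, Matrix.cons_val_two, Matrix.tail_cons,
        Matrix.cons_val_three] at hp0
    linear_combination hp0
  obtain ⟨s4, hs4⟩ : ∃ s : Finset K, 4 ≤ s.card := by
    apply Cardinal.exists_finset_le_card
    exact_mod_cast hK
  have hS := fun a : K => ca10_vand4 s4 hs4 (c3000 + c2100*a + c1200*a^2 + (c0300 - c2001)*a^3 - c1101*a^4 - c0201*a^5 + c1002*a^6 + c0102*a^7 - c0003*a^9) (c2010 + (c1110 + c2001)*a + (c0210 + c1101)*a^2 + (c0201 - c1011)*a^3 + (-c0111 - 2*c1002)*a^4 - 2*c0102*a^5 + c0012*a^6 + 3*c0003*a^7) (c1020 + (c0120 + c1011)*a + (c0111 + c1002)*a^2 + (-c0021 + c0102)*a^3 - 2*c0012*a^4 - 3*c0003*a^5) (c0030 + c0021*a + c0012*a^2 + c0003*a^3)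
    (fun b hb => by linear_combination hEv a b)
  have hS0 : ∀ a : K, (c3000 + c2100*a + c1200*a^2 + (c0300 - c2001)*a^3 - c1101*a^4 - c0201*a^5 + c1002*a^6 + c0102*a^7 - c0003*a^9) = 0 := fun a => (hS a).1
  have hS1 : ∀ a : K, (c2010 + (c1110 + c2001)*a + (c0210 + c1101)*a^2 + (c0201 - c1011)*a^3 + (-c0111 - 2*c1002)*a^4 - 2*c0102*a^5 + c0012*a^6 + 3*c0003*a^7) = 0 := fun a => (hS a).2.1
  have hS2 : ∀ a : K, (c1020 + (c0120 + c1011)*a + (c0111 + c1002)*a^2 + (-c0021 + c0102)*a^3 - 2*c0012*a^4 - 3*c0003*a^5) = 0 := fun a => (hS a).2.2.1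
  have hS3 : ∀ a : K, (c0030 + c0021*a + c0012*a^2 + c0003*a^3) = 0 := fun a => (hS a).2.2.2
  obtain ⟨z0030, z0021, z0012, z0003⟩ :=
    ca10_vand4 s4 hs4 c0030 c0021 c0012 c0003 (fun x hx => by linear_combination hS3 x)
  obtain ⟨z1020, r0120, r0111, z0102⟩ :=
    ca10_vand4 s4 hs4 c1020 (c0120 + c1011) (c0111 + c1002) c0102 (fun x hx => by
      linear_combination hS2 x + x^3 * z0021 + 2*x^4 * z0012 + 3*x^5 * z0003)
  by_cases hbig : (6 : Cardinal) ≤ Cardinal.mk K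
  · -- at least 6 elements
    obtain ⟨s6, hs6⟩ : ∃ s : Finset K, 6 ≤ s.card := by
      apply Cardinal.exists_finset_le_card
      exact_mod_cast hbig
    obtain ⟨z2010, r2001, r0210, r0201, z1002n⟩ :=
      ca10_vand5 s6 (le_trans (by norm_num) hs6) c2010 (c1110 + c2001) (c0210 + c1101)
        (c0201 - c1011) (-c1002) (fun x hx => by
          linear_combination hS1 x + x^4 * r0111 + 2*x^5 * z0102 - x^6 * z0012 - 3*x^7 * z0003)
    have z1002 : c1002 = 0 := by linear_combination -z1002n
    obtain ⟨z3000, z2100, z1200, r0300, z1101n, z0201n⟩ :=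
      ca10_vand6 s6 hs6 c3000 c2100 c1200 (c0300 - c2001) (-c1101) (-c0201) (fun x hx => by
        linear_combination hS0 x - x^6 * z1002 - x^7 * z0102 + x^9 * z0003)
    have z1101 : c1101 = 0 := by linear_combination -z1101n
    have z0201 : c0201 = 0 := by linear_combination -z0201n
    have z0210 : c0210 = 0 := by linear_combination r0210 - z1101
    have z1011 : c1011 = 0 := by linear_combination -r0201 + z0201
    have z0120 : c0120 = 0 := by linear_combination r0120 - z1011
    have z0111 : c0111 = 0 := by linear_combination r0111 - z1002
    have w2001 : c2001 = -c1110 := by linear_combination r2001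
    have v0300 : c0300 = -c1110 := by linear_combination r0300 + r2001
    refine ⟨c1110, ?_, ?_⟩
    · intro hl0
      have hne : (![(1:K), 0, 0, 1] : Fin 4 → K) ≠ 0 := fun hcon => by
        simpa using congrFun hcon 0
      have hpe : MvPolynomial.eval ![(1:K), 0, 0, 1] p = 0 := by
        rw [hrep]
        simp only [map_add, map_mul, map_pow, eval_C, eval_X, Matrix.cons_val_zero,
            Matrix.cons_val_one, Matrix.head_cons, Matrix.cons_val_two, Matrix.tail_cons,
            Matrix.cons_val_three]
        linear_combination z3000 + w2001 + z1002 + z0003 - hl0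
      have hf0 := (h _ hne).mp hpe
      simp only [map_sub, map_mul, map_pow, eval_X, Matrix.cons_val_zero,
            Matrix.cons_val_one, Matrix.head_cons, Matrix.cons_val_two, Matrix.tail_cons,
            Matrix.cons_val_three] at hf0
      norm_num at hf0
    · rw [hrep, z3000, z2100, z2010, w2001, z1200, z1101, z1020, z1011, z1002, v0300,
        z0210, z0201, z0120, z0111, z0102, z0030, z0021, z0012, z0003]
      simp only [map_zero, map_neg]
      ring
  · -- finitely many elements : card is 4 or 5
    have hfin : Finite K := by
      rw [← Cardinal.lt_aleph0_iff_finite]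
      calc Cardinal.mk K < 6 := not_le.mp hbig
        _ < Cardinal.aleph0 := by
          have := Cardinal.nat_lt_aleph0 6
          exact_mod_cast this
    haveI : Fintype K := Fintype.ofFinite K
    have hcard_le : Fintype.card K < 6 := by
      have hlt : (Fintype.card K : Cardinal) < 6 := by
        rw [← Cardinal.mk_fintype]
        exact not_le.mp hbig
      exact_mod_cast hlt
    have hcard_ge : 4 ≤ Fintype.card K := by
      have h4 : (4 : Cardinal) ≤ (Fintype.card K : Cardinal) := by
        rw [← Cardinal.mk_fintype]
        exact hK
      exact_mod_cast h4
    obtain hc4 | hc5 : Fintype.card K = 4 ∨ Fintype.card K = 5 := by omega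
    · -- card = 4
      have hpow : ∀ x : K, x ^ 4 = x := fun x => by
        have hx := FiniteField.pow_card x
        rwa [hc4] at hx
      have hsu : 4 ≤ (Finset.univ : Finset K).card := by
        rw [Finset.card_univ, hc4]
      obtain ⟨z2010, r2001, r0210, r0201⟩ :=
        ca10_vand4 Finset.univ hsu c2010 (c1110 + c2001 - c1002) (c0210 + c1101)
          (c0201 - c1011) (fun x hx => by
            linear_combination hS1 x + x^4 * r0111 + c1002 * hpow x + 2*x^5 * z0102
              - x^6 * z0012 - 3*x^7 * z0003)
      obtain ⟨z3000, r2100, r1200, r0300⟩ :=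
        ca10_vand4 Finset.univ hsu c3000 (c2100 - c1101) (c1200 - c0201)
          (c0300 - c2001 + c1002) (fun x hx => by
            linear_combination hS0 x + c1101 * hpow x + c0201 * x * hpow x
              - c1002 * x^2 * hpow x - x^7 * z0102 + x^9 * z0003)
      have v2001 : c2001 = c1002 - c1110 := by linear_combination r2001
      have v0300 : c0300 = -c1110 := by linear_combination r0300 + r2001
      have v2100 : c2100 = c1101 := by linear_combination r2100
      have v0210 : c0210 = -c1101 := by linear_combination r0210
      have v1200 : c1200 = c0201 := by linear_combination r1200
      have v0201 : c0201 = c1011 := by linear_combination r0201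
      have v0120 : c0120 = -c1011 := by linear_combination r0120
      have v0111 : c0111 = -c1002 := by linear_combination r0111
      have z1011 : c1011 = 0 := by
        by_contra hv
        have hinv : c1011 * c1011⁻¹ = 1 := mul_inv_cancel₀ hv
        have hne : (![(1:K), 0, (c1110 - 2*c1002) * c1011⁻¹, 1] : Fin 4 → K) ≠ 0 :=
          fun hcon => by simpa using congrFun hcon 0
        have hpe : MvPolynomial.eval ![(1:K), 0, (c1110 - 2*c1002) * c1011⁻¹, 1] p = 0 := by
          rw [hrep]
          simp only [map_add, map_mul, map_pow, eval_C, eval_X, Matrix.cons_val_zero,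
        Matrix.cons_val_one, Matrix.head_cons, Matrix.cons_val_two, Matrix.tail_cons,
        Matrix.cons_val_three]
          linear_combination z3000 + ((c1110 - 2*c1002) * c1011⁻¹) * z2010 + v2001
            + ((c1110 - 2*c1002) * c1011⁻¹)^2 * z1020
            + ((c1110 - 2*c1002) * c1011⁻¹)^3 * z0030
            + ((c1110 - 2*c1002) * c1011⁻¹)^2 * z0021
            + ((c1110 - 2*c1002) * c1011⁻¹) * z0012 + z0003
            + (c1110 - 2*c1002) * hinv
        have hf0 := (h _ hne).mp hpe
        simp only [map_sub, map_mul, map_pow, eval_X, Matrix.cons_val_zero,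
        Matrix.cons_val_one, Matrix.head_cons, Matrix.cons_val_two, Matrix.tail_cons,
        Matrix.cons_val_three] at hf0
        norm_num at hf0
      have z0201 : c0201 = 0 := by rw [v0201, z1011]
      have z1200 : c1200 = 0 := by rw [v1200, z0201]
      have z0120 : c0120 = 0 := by rw [v0120, z1011, neg_zero]
      have z1101 : c1101 = 0 := by
        by_contra hu
        have hne : (![(c1110*c1101)^2, c1101, 0, 0] : Fin 4 → K) ≠ 0 :=
          fun hcon => hu (by simpa using congrFun hcon 1)
        have hpe : MvPolynomial.eval ![(c1110*c1101)^2, c1101, 0, 0] p = 0 := by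
          rw [hrep]
          simp only [map_add, map_mul, map_pow, eval_C, eval_X, Matrix.cons_val_zero,
        Matrix.cons_val_one, Matrix.head_cons, Matrix.cons_val_two, Matrix.tail_cons,
        Matrix.cons_val_three]
          linear_combination ((c1110*c1101)^2)^3 * z3000
            + ((c1110*c1101)^2)^2 * c1101 * v2100
            + ((c1110*c1101)^2) * c1101^2 * z1200
            + c1101^3 * v0300 + c1101^2 * hpow (c1110*c1101)
        have hf0 := (h _ hne).mp hpe
        simp only [map_sub, map_mul, map_pow, eval_X, Matrix.cons_val_zero,
        Matrix.cons_val_one, Matrix.head_cons, Matrix.cons_val_two, Matrix.tail_cons,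
        Matrix.cons_val_three] at hf0
        have hcube : c1101 ^ 3 = 0 := by linear_combination -hf0
        exact hu (pow_eq_zero_iff (by norm_num : (3:ℕ) ≠ 0) |>.mp hcube)
      have z2100 : c2100 = 0 := by rw [v2100, z1101]
      have z0210 : c0210 = 0 := by rw [v0210, z1101, neg_zero]
      have hlw : c1002 - c1110 ≠ 0 := by
        intro hlw0
        have hne : (![(1:K), 1, 1, 1] : Fin 4 → K) ≠ 0 := fun hcon => by
          simpa using congrFun hcon 0
        have hpe : MvPolynomial.eval ![(1:K), 1, 1, 1] p = 0 := by
          rw [hrep]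
          simp only [map_add, map_mul, map_pow, eval_C, eval_X, Matrix.cons_val_zero,
        Matrix.cons_val_one, Matrix.head_cons, Matrix.cons_val_two, Matrix.tail_cons,
        Matrix.cons_val_three]
          linear_combination z3000 + z2100 + z2010 + v2001 + z1200 + z1101 + z1020
            + z1011 + v0300 + z0210 + z0201 + z0120 + v0111 + z0102 + z0030 + z0021
            + z0012 + z0003 + hlw0
        have hf0 := (h _ hne).mp hpe
        simp only [map_sub, map_mul, map_pow, eval_X, Matrix.cons_val_zero,
        Matrix.cons_val_one, Matrix.head_cons, Matrix.cons_val_two, Matrix.tail_cons,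
        Matrix.cons_val_three] at hf0
        norm_num at hf0
      have z1002 : c1002 = 0 := by
        by_contra hw
        have hinv : c1002 * c1002⁻¹ = 1 := mul_inv_cancel₀ hw
        have hne : (![(1:K), 0, 0, (c1110 - c1002) * c1002⁻¹] : Fin 4 → K) ≠ 0 :=
          fun hcon => by simpa using congrFun hcon 0
        have hpe : MvPolynomial.eval ![(1:K), 0, 0, (c1110 - c1002) * c1002⁻¹] p = 0 := by
          rw [hrep]
          simp only [map_add, map_mul, map_pow, eval_C, eval_X, Matrix.cons_val_zero,
        Matrix.cons_val_one, Matrix.head_cons, Matrix.cons_val_two, Matrix.tail_cons,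
        Matrix.cons_val_three]
          linear_combination z3000 + ((c1110 - c1002) * c1002⁻¹)^3 * z0003
            + ((c1110 - c1002) * c1002⁻¹) * v2001
            + ((c1110 - c1002)^2 * c1002⁻¹) * hinv
        have hf0 := (h _ hne).mp hpe
        simp only [map_sub, map_mul, map_pow, eval_X, Matrix.cons_val_zero,
        Matrix.cons_val_one, Matrix.head_cons, Matrix.cons_val_two, Matrix.tail_cons,
        Matrix.cons_val_three] at hf0
        have hT : (c1110 - c1002) * c1002⁻¹ = 0 := by linear_combination -hf0
        rcases mul_eq_zero.mp hT with h1 | h2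
        · exact hlw (by linear_combination -h1)
        · rw [h2, mul_zero] at hinv
          exact zero_ne_one hinv
      have z0111 : c0111 = 0 := by rw [v0111, z1002, neg_zero]
      have w2001 : c2001 = -c1110 := by linear_combination v2001 + z1002
      refine ⟨c1110, ?_, ?_⟩
      · intro hl0
        have hne : (![(1:K), 0, 0, 1] : Fin 4 → K) ≠ 0 := fun hcon => by
          simpa using congrFun hcon 0
        have hpe : MvPolynomial.eval ![(1:K), 0, 0, 1] p = 0 := by
          rw [hrep]
          simp only [map_add, map_mul, map_pow, eval_C, eval_X, Matrix.cons_val_zero,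
              Matrix.cons_val_one, Matrix.head_cons, Matrix.cons_val_two, Matrix.tail_cons,
              Matrix.cons_val_three]
          linear_combination z3000 + w2001 + z1002 + z0003 - hl0
        have hf0 := (h _ hne).mp hpe
        simp only [map_sub, map_mul, map_pow, eval_X, Matrix.cons_val_zero,
              Matrix.cons_val_one, Matrix.head_cons, Matrix.cons_val_two, Matrix.tail_cons,
              Matrix.cons_val_three] at hf0
        norm_num at hf0
      · rw [hrep, z3000, z2100, z2010, w2001, z1200, z1101, z1020, z1011, z1002, v0300,
          z0210, z0201, z0120, z0111, z0102, z0030, z0021, z0012, z0003]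
        simp only [map_zero, map_neg]
        ring
    · -- card = 5
      have hpow : ∀ x : K, x ^ 5 = x := fun x => by
        have hx := FiniteField.pow_card x
        rwa [hc5] at hx
      have hsu5 : 5 ≤ (Finset.univ : Finset K).card := by
        rw [Finset.card_univ, hc5]
      obtain ⟨z2010, r2001, r0210, r0201, z1002n⟩ :=
        ca10_vand5 Finset.univ hsu5 c2010 (c1110 + c2001) (c0210 + c1101)
          (c0201 - c1011) (-c1002) (fun x hx => by
            linear_combination hS1 x + x^4 * r0111 + 2*x^5 * z0102 - x^6 * z0012 - 3*x^7 * z0003)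
      have z1002 : c1002 = 0 := by linear_combination -z1002n
      obtain ⟨z3000, r2100, z1200, r0300, z1101n⟩ :=
        ca10_vand5 Finset.univ hsu5 c3000 (c2100 - c0201) c1200 (c0300 - c2001)
          (-c1101) (fun x hx => by
            linear_combination hS0 x + c0201 * hpow x - x^6 * z1002 - x^7 * z0102 + x^9 * z0003)
      have z1101 : c1101 = 0 := by linear_combination -z1101n
      have z0210 : c0210 = 0 := by linear_combination r0210 - z1101
      have z0111 : c0111 = 0 := by linear_combination r0111 - z1002
      have w2001 : c2001 = -c1110 := by linear_combination r2001
      have v0300 : c0300 = -c1110 := by linear_combination r0300 + r2001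
      have v0201 : c0201 = c1011 := by linear_combination r0201
      have v2100 : c2100 = c1011 := by linear_combination r2100 + r0201
      have v0120 : c0120 = -c1011 := by linear_combination r0120
      have z1011 : c1011 = 0 := by
        by_contra ht
        have hinv : c1011 * c1011⁻¹ = 1 := mul_inv_cancel₀ ht
        have hne : (![(0:K), 1, 0, c1110 * c1011⁻¹] : Fin 4 → K) ≠ 0 :=
          fun hcon => by simpa using congrFun hcon 1
        have hpe : MvPolynomial.eval ![(0:K), 1, 0, c1110 * c1011⁻¹] p = 0 := by
          rw [hrep]
          simp only [map_add, map_mul, map_pow, eval_C, eval_X, Matrix.cons_val_zero,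
        Matrix.cons_val_one, Matrix.head_cons, Matrix.cons_val_two, Matrix.tail_cons,
        Matrix.cons_val_three]
          linear_combination v0300 + (c1110 * c1011⁻¹) * v0201
            + (c1110 * c1011⁻¹)^2 * z0102 + (c1110 * c1011⁻¹)^3 * z0003
            + c1110 * hinv
        have hf0 := (h _ hne).mp hpe
        simp only [map_sub, map_mul, map_pow, eval_X, Matrix.cons_val_zero,
        Matrix.cons_val_one, Matrix.head_cons, Matrix.cons_val_two, Matrix.tail_cons,
        Matrix.cons_val_three] at hf0
        norm_num at hf0
      have z0201 : c0201 = 0 := by rw [v0201, z1011]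
      have z2100 : c2100 = 0 := by rw [v2100, z1011]
      have z0120 : c0120 = 0 := by rw [v0120, z1011, neg_zero]
      refine ⟨c1110, ?_, ?_⟩
      · intro hl0
        have hne : (![(1:K), 0, 0, 1] : Fin 4 → K) ≠ 0 := fun hcon => by
          simpa using congrFun hcon 0
        have hpe : MvPolynomial.eval ![(1:K), 0, 0, 1] p = 0 := by
          rw [hrep]
          simp only [map_add, map_mul, map_pow, eval_C, eval_X, Matrix.cons_val_zero,
              Matrix.cons_val_one, Matrix.head_cons, Matrix.cons_val_two, Matrix.tail_cons,
              Matrix.cons_val_three]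
          linear_combination z3000 + w2001 + z1002 + z0003 - hl0
        have hf0 := (h _ hne).mp hpe
        simp only [map_sub, map_mul, map_pow, eval_X, Matrix.cons_val_zero,
              Matrix.cons_val_one, Matrix.head_cons, Matrix.cons_val_two, Matrix.tail_cons,
              Matrix.cons_val_three] at hf0
        norm_num at hf0
      · rw [hrep, z3000, z2100, z2010, w2001, z1200, z1101, z1020, z1011, z1002, v0300,
          z0210, z0201, z0120, z0111, z0102, z0030, z0021, z0012, z0003]
        simp only [map_zero, map_neg]
        ring
end

section
/- Let K be the field with 2 elements, f = X₀X₁X₂ − X₁³ − X₀²X₃ ∈ K[X₀,X₁,X₂,X₃], and let p be a homogeneous polynomial of degree 3 in K[X₀,X₁,X₂,X₃]. Then the set {Kx : x ∈ K⁴ \ {0}, p(x) = 0} equals the Cayley surface F = {Kx : x ∈ K⁴ \ {0}, f(x) = 0} if and only if there exist coefficients b_{ij} ∈ {0,1} (for 0 ≤ i < j ≤ 3) such that f − p = Σ_{0 ≤ i < j ≤ 3} b_{ij}·(Xᵢ²Xⱼ + XᵢXⱼ²). Consequently there are exactly 64 cubic forms p with V(p) = F. -/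
open MvPolynomial

namespace Stmt12Aux

open Finsupp

theorem fseq (d e : Fin 4 →₀ ℕ) : d = e ↔ (d 0 = e 0 ∧ d 1 = e 1 ∧ d 2 = e 2 ∧ d 3 = e 3) := by
  constructor
  · rintro rfl; exact ⟨rfl, rfl, rfl, rfl⟩
  · rintro ⟨h0, h1, h2, h3⟩; ext i; fin_cases i <;> assumption

theorem decomp (e : Fin 4 →₀ ℕ) :
    e = Finsupp.single 0 (e 0) + Finsupp.single 1 (e 1) + Finsupp.single 2 (e 2)
      + Finsupp.single 3 (e 3) := by
  ext i; fin_cases i <;> simp [Finsupp.single_apply]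

theorem degree4 (e : Fin 4 →₀ ℕ) : e.degree = e 0 + e 1 + e 2 + e 3 := by
  rw [Finsupp.degree_apply, Finset.sum_subset (Finset.subset_univ _)
    (by intro i _ h; simpa using h)]
  simp [Fin.sum_univ_four]

variable {K : Type*} [Field K]

noncomputable def ex20 (q : MvPolynomial (Fin 4) K) : MvPolynomial (Fin 4) K :=
  C (coeff (single 0 3) q) * X 0 ^ 3 + C (coeff (single 1 3) q) * X 1 ^ 3 +
  C (coeff (single 2 3) q) * X 2 ^ 3 + C (coeff (single 3 3) q) * X 3 ^ 3 +
  C (coeff (single 0 2 + single 1 1) q) * (X 0 ^ 2 * X 1) +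
  C (coeff (single 0 2 + single 2 1) q) * (X 0 ^ 2 * X 2) +
  C (coeff (single 0 2 + single 3 1) q) * (X 0 ^ 2 * X 3) +
  C (coeff (single 1 2 + single 0 1) q) * (X 1 ^ 2 * X 0) +
  C (coeff (single 1 2 + single 2 1) q) * (X 1 ^ 2 * X 2) +
  C (coeff (single 1 2 + single 3 1) q) * (X 1 ^ 2 * X 3) +
  C (coeff (single 2 2 + single 0 1) q) * (X 2 ^ 2 * X 0) +
  C (coeff (single 2 2 + single 1 1) q) * (X 2 ^ 2 * X 1) +
  C (coeff (single 2 2 + single 3 1) q) * (X 2 ^ 2 * X 3) +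
  C (coeff (single 3 2 + single 0 1) q) * (X 3 ^ 2 * X 0) +
  C (coeff (single 3 2 + single 1 1) q) * (X 3 ^ 2 * X 1) +
  C (coeff (single 3 2 + single 2 1) q) * (X 3 ^ 2 * X 2) +
  C (coeff (single 0 1 + single 1 1 + single 2 1) q) * (X 0 * X 1 * X 2) +
  C (coeff (single 0 1 + single 1 1 + single 3 1) q) * (X 0 * X 1 * X 3) +
  C (coeff (single 0 1 + single 2 1 + single 3 1) q) * (X 0 * X 2 * X 3) +
  C (coeff (single 1 1 + single 2 1 + single 3 1) q) * (X 1 * X 2 * X 3)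

theorem homog_t2 (c : K) (i j : Fin 4) : (C c * (X i ^ 2 * X j)).IsHomogeneous 3 :=
  IsHomogeneous.C_mul (by simpa using ((isHomogeneous_X K i).pow 2).mul (isHomogeneous_X K j)) c

theorem homog_t1 (c : K) (i : Fin 4) : (C c * X i ^ 3).IsHomogeneous 3 :=
  IsHomogeneous.C_mul (by simpa using (isHomogeneous_X K i).pow 3) c

theorem homog_t3 (c : K) (i j k : Fin 4) : (C c * (X i * X j * X k)).IsHomogeneous 3 :=
  IsHomogeneous.C_mul
    (by simpa using ((isHomogeneous_X K i).mul (isHomogeneous_X K j)).mul (isHomogeneous_X K k)) c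

theorem homog_g (c : K) (i j : Fin 4) :
    (C c * (X i ^ 2 * X j + X i * X j ^ 2)).IsHomogeneous 3 :=
  IsHomogeneous.C_mul
    (by
      apply IsHomogeneous.add
      · simpa using ((isHomogeneous_X K i).pow 2).mul (isHomogeneous_X K j)
      · simpa using (isHomogeneous_X K i).mul ((isHomogeneous_X K j).pow 2)) c

theorem fP_homog : (X 0 * X 1 * X 2 - X 1 ^ 3 - X 0 ^ 2 * X 3 :
    MvPolynomial (Fin 4) K).IsHomogeneous 3 := by
  apply IsHomogeneous.sub
  apply IsHomogeneous.sub
  · simpa using ((isHomogeneous_X K 0).mul (isHomogeneous_X K 1)).mul (isHomogeneous_X K 2)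
  · simpa using (isHomogeneous_X K 1).pow 3
  · simpa using ((isHomogeneous_X K 0).pow 2).mul (isHomogeneous_X K 3)

theorem ex20_homog (q : MvPolynomial (Fin 4) K) : (ex20 q).IsHomogeneous 3 := by
  unfold ex20
  repeat' apply IsHomogeneous.add
  all_goals first | with_reducible exact homog_t1 _ _ | with_reducible exact homog_t2 _ _ _ | with_reducible exact homog_t3 _ _ _ _

set_option maxHeartbeats 1000000 in
theorem expand (q : MvPolynomial (Fin 4) K) (hq : q.IsHomogeneous 3) : q = ex20 q := by
  ext e
  by_cases he : e.degree = 3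
  · obtain ⟨a, b, c, d, rfl⟩ : ∃ a b c d, e = single 0 a + single 1 b + single 2 c + single 3 d :=
      ⟨e 0, e 1, e 2, e 3, decomp e⟩
    rw [degree4] at he
    simp [Finsupp.single_apply] at he
    have ha : a ≤ 3 := by omega
    have hb : b ≤ 3 := by omega
    have hc : c ≤ 3 := by omega
    have hd : d ≤ 3 := by omega
    unfold ex20
    interval_cases a <;> interval_cases b <;> interval_cases c <;> interval_cases d
    all_goals try omega
    all_goals
      simp only [Finsupp.single_zero, add_zero, zero_add, X, monomial_pow, monomial_mul,
        coeff_add, coeff_C_mul, coeff_monomial, one_pow, one_mul, mul_one,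
        Finsupp.smul_single, smul_eq_mul, Nat.mul_one]
      simp [fseq, Finsupp.single_apply]
    all_goals
      exact congrArg (fun d => coeff d q) (by ext i; fin_cases i <;> simp [Finsupp.single_apply])
  · rw [hq.coeff_eq_zero he, (ex20_homog q).coeff_eq_zero he]

theorem eval_zero_of_homog (q : MvPolynomial (Fin 4) K) (hq : q.IsHomogeneous 3) :
    eval (0 : Fin 4 → K) q = 0 := by
  rw [expand q hq]; simp [ex20]

set_option maxHeartbeats 1000000 in
theorem keyB (hss : ∀ a : K, a + a = 0) (q : MvPolynomial (Fin 4) K)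
    (hq : q.IsHomogeneous 3) (hv : ∀ x : Fin 4 → K, eval x q = 0) :
    q = ∑ i : Fin 4, ∑ j : Fin 4,
        if i < j then C (coeff (single i 2 + single j 1) q) * (X i ^ 2 * X j + X i * X j ^ 2)
        else 0 := by
  have hqe := expand q hq
  have e0 := hv (fun k => if k = 0 then 1 else 0)
  have e1 := hv (fun k => if k = 1 then 1 else 0)
  have e2 := hv (fun k => if k = 2 then 1 else 0)
  have e3 := hv (fun k => if k = 3 then 1 else 0)
  rw [hqe] at e0 e1 e2 e3
  simp [ex20] at e0 e1 e2 e3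
  have f01 := hv (fun k => if k = 0 ∨ k = 1 then 1 else 0)
  have f02 := hv (fun k => if k = 0 ∨ k = 2 then 1 else 0)
  have f03 := hv (fun k => if k = 0 ∨ k = 3 then 1 else 0)
  have f12 := hv (fun k => if k = 1 ∨ k = 2 then 1 else 0)
  have f13 := hv (fun k => if k = 1 ∨ k = 3 then 1 else 0)
  have f23 := hv (fun k => if k = 2 ∨ k = 3 then 1 else 0)
  rw [hqe] at f01 f02 f03 f12 f13 f23
  simp [ex20] at f01 f02 f03 f12 f13 f23
  have p01 : coeff (single 1 2 + single 0 1) q = coeff (single 0 2 + single 1 1) q := by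
    linear_combination f01 - e0 - e1 - hss (coeff (single 0 2 + single 1 1) q)
  have p02 : coeff (single 2 2 + single 0 1) q = coeff (single 0 2 + single 2 1) q := by
    linear_combination f02 - e0 - e2 - hss (coeff (single 0 2 + single 2 1) q)
  have p03 : coeff (single 3 2 + single 0 1) q = coeff (single 0 2 + single 3 1) q := by
    linear_combination f03 - e0 - e3 - hss (coeff (single 0 2 + single 3 1) q)
  have p12 : coeff (single 2 2 + single 1 1) q = coeff (single 1 2 + single 2 1) q := by
    linear_combination f12 - e1 - e2 - hss (coeff (single 1 2 + single 2 1) q)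
  have p13 : coeff (single 3 2 + single 1 1) q = coeff (single 1 2 + single 3 1) q := by
    linear_combination f13 - e1 - e3 - hss (coeff (single 1 2 + single 3 1) q)
  have p23 : coeff (single 3 2 + single 2 1) q = coeff (single 2 2 + single 3 1) q := by
    linear_combination f23 - e2 - e3 - hss (coeff (single 2 2 + single 3 1) q)
  have g012 := hv (fun k => if k = 0 ∨ k = 1 ∨ k = 2 then 1 else 0)
  have g013 := hv (fun k => if k = 0 ∨ k = 1 ∨ k = 3 then 1 else 0)
  have g023 := hv (fun k => if k = 0 ∨ k = 2 ∨ k = 3 then 1 else 0)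
  have g123 := hv (fun k => if k = 1 ∨ k = 2 ∨ k = 3 then 1 else 0)
  rw [hqe] at g012 g013 g023 g123
  simp [ex20] at g012 g013 g023 g123
  have t012 : coeff (single 0 1 + single 1 1 + single 2 1) q = 0 := by
    linear_combination g012 - e0 - e1 - e2 - p01 - p02 - p12
      - hss (coeff (single 0 2 + single 1 1) q) - hss (coeff (single 0 2 + single 2 1) q)
      - hss (coeff (single 1 2 + single 2 1) q)
  have t013 : coeff (single 0 1 + single 1 1 + single 3 1) q = 0 := by
    linear_combination g013 - e0 - e1 - e3 - p01 - p03 - p13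
      - hss (coeff (single 0 2 + single 1 1) q) - hss (coeff (single 0 2 + single 3 1) q)
      - hss (coeff (single 1 2 + single 3 1) q)
  have t023 : coeff (single 0 1 + single 2 1 + single 3 1) q = 0 := by
    linear_combination g023 - e0 - e2 - e3 - p02 - p03 - p23
      - hss (coeff (single 0 2 + single 2 1) q) - hss (coeff (single 0 2 + single 3 1) q)
      - hss (coeff (single 2 2 + single 3 1) q)
  have t123 : coeff (single 1 1 + single 2 1 + single 3 1) q = 0 := by
    linear_combination g123 - e1 - e2 - e3 - p12 - p13 - p23
      - hss (coeff (single 1 2 + single 2 1) q) - hss (coeff (single 1 2 + single 3 1) q)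
      - hss (coeff (single 2 2 + single 3 1) q)
  calc q = ex20 q := hqe
    _ = _ := by
        unfold ex20
        rw [e0, e1, e2, e3, t012, t013, t023, t123, p01, p02, p03, p12, p13, p23]
        simp only [map_zero, zero_mul, add_zero, zero_add]
        simp [Fin.sum_univ_four]
        ring

theorem eval_sum_zero (hss : ∀ a : K, a + a = 0) (h01 : ∀ a : K, a = 0 ∨ a = 1)
    (b : Fin 4 → Fin 4 → K) (x : Fin 4 → K) :
    eval x (∑ i : Fin 4, ∑ j : Fin 4,
      if i < j then C (b i j) * (X i ^ 2 * X j + X i * X j ^ 2) else 0) = 0 := by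
  have hg : ∀ i j : Fin 4, x i ^ 2 * x j + x i * x j ^ 2 = 0 := by
    intro i j
    rcases h01 (x i) with h | h <;> rcases h01 (x j) with h' | h' <;> rw [h, h'] <;> ring_nf
    linear_combination hss (1:K)
  simp [Fin.sum_univ_four, hg]

end Stmt12Aux

open Stmt12Aux Finsupp in
set_option maxHeartbeats 2000000 in
theorem stmt_12 {K : Type*} [Field K] (hK : Nat.card K = 2)
    (p : MvPolynomial (Fin 4) K) (hp : p.IsHomogeneous 3) :
    ((∀ x : Fin 4 → K, x ≠ 0 →
        (eval x p = 0 ↔ eval x (X 0 * X 1 * X 2 - X 1 ^ 3 - X 0 ^ 2 * X 3 :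
            MvPolynomial (Fin 4) K) = 0)) ↔
      ∃ b : Fin 4 → Fin 4 → K,
        (X 0 * X 1 * X 2 - X 1 ^ 3 - X 0 ^ 2 * X 3 : MvPolynomial (Fin 4) K) - p
          = ∑ i : Fin 4, ∑ j : Fin 4,
              if i < j then C (b i j) * (X i ^ 2 * X j + X i * X j ^ 2) else 0) ∧
    Set.ncard {q : MvPolynomial (Fin 4) K | q.IsHomogeneous 3 ∧
        ∀ x : Fin 4 → K, x ≠ 0 →
          (eval x q = 0 ↔ eval x (X 0 * X 1 * X 2 - X 1 ^ 3 - X 0 ^ 2 * X 3 :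
              MvPolynomial (Fin 4) K) = 0)} = 64 := by
  have hfin : Finite K := Nat.finite_of_card_ne_zero (by omega)
  have : Fintype K := Fintype.ofFinite K
  classical
  have h01 : ∀ a : K, a = 0 ∨ a = 1 := by
    intro a
    have h : (Finset.univ : Finset K) = ({0, 1} : Finset K) := by
      apply (Finset.eq_of_subset_of_card_le (Finset.subset_univ _) ?_).symm
      rw [Finset.card_univ, ← Nat.card_eq_fintype_card, hK]
      simpa using Finset.card_insert_le (0 : K) {1}
    have hm := Finset.mem_univ a
    rw [h] at hm; simpa using hm
  have h2 : (1 : K) + 1 = 0 := by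
    rcases h01 (1 + 1) with h | h
    · exact h
    · simpa using h
  have hss : ∀ a : K, a + a = 0 := by
    intro a
    have : a * (1 + 1) = 0 := by rw [h2, mul_zero]
    linear_combination this
  set f : MvPolynomial (Fin 4) K := X 0 * X 1 * X 2 - X 1 ^ 3 - X 0 ^ 2 * X 3 with hf
  have hfh : f.IsHomogeneous 3 := fP_homog
  -- the key forward lemma, for any homogeneous q with the same zero set as f
  have fwd : ∀ q : MvPolynomial (Fin 4) K, q.IsHomogeneous 3 →
      (∀ x : Fin 4 → K, x ≠ 0 → (eval x q = 0 ↔ eval x f = 0)) →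
      f - q = ∑ i : Fin 4, ∑ j : Fin 4,
        if i < j then C (coeff (single i 2 + single j 1) (f - q))
          * (X i ^ 2 * X j + X i * X j ^ 2) else 0 := by
    intro q hq hsame
    have hdh : (f - q).IsHomogeneous 3 := hfh.sub hq
    have hv : ∀ x : Fin 4 → K, eval x (f - q) = 0 := by
      intro x
      by_cases hx : x = 0
      · subst hx; exact eval_zero_of_homog _ hdh
      · rw [map_sub]
        rcases h01 (eval x q) with h | h
        · rw [h, (hsame x hx).mp h, sub_zero]
        · rcases h01 (eval x f) with h' | h'
          · exact absurd ((hsame x hx).mpr h') (by rw [h]; exact one_ne_zero)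
          · rw [h, h', sub_self]
    exact keyB hss (f - q) hdh hv
  -- backward lemma
  have bwd : ∀ q : MvPolynomial (Fin 4) K,
      (∃ b : Fin 4 → Fin 4 → K, f - q = ∑ i : Fin 4, ∑ j : Fin 4,
        if i < j then C (b i j) * (X i ^ 2 * X j + X i * X j ^ 2) else 0) →
      ∀ x : Fin 4 → K, eval x q = eval x f := by
    rintro q ⟨b, hb⟩ x
    have : eval x (f - q) = 0 := by rw [hb]; exact eval_sum_zero hss h01 b x
    rw [map_sub, sub_eq_zero] at this
    exact this.symm
  constructor
  · constructor
    · intro hsame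
      exact ⟨_, fwd p hp hsame⟩
    · rintro ⟨b, hb⟩ x hx
      rw [bwd p ⟨b, hb⟩ x]
  · -- counting
    set ψ : (K × K × K × K × K × K) → MvPolynomial (Fin 4) K := fun b =>
      f - (C b.1 * (X 0 ^ 2 * X 1 + X 0 * X 1 ^ 2)
        + C b.2.1 * (X 0 ^ 2 * X 2 + X 0 * X 2 ^ 2)
        + C b.2.2.1 * (X 0 ^ 2 * X 3 + X 0 * X 3 ^ 2)
        + C b.2.2.2.1 * (X 1 ^ 2 * X 2 + X 1 * X 2 ^ 2)
        + C b.2.2.2.2.1 * (X 1 ^ 2 * X 3 + X 1 * X 3 ^ 2)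
        + C b.2.2.2.2.2 * (X 2 ^ 2 * X 3 + X 2 * X 3 ^ 2)) with hψ
    have hset : {q : MvPolynomial (Fin 4) K | q.IsHomogeneous 3 ∧
        ∀ x : Fin 4 → K, x ≠ 0 → (eval x q = 0 ↔ eval x f = 0)} = Set.range ψ := by
      ext q
      constructor
      · rintro ⟨hq, hcond⟩
        have hb := fwd q hq hcond
        set b : Fin 4 → Fin 4 → K := fun i j => coeff (single i 2 + single j 1) (f - q) with hbdef
        refine ⟨(b 0 1, b 0 2, b 0 3, b 1 2, b 1 3, b 2 3), ?_⟩
        have hexp : (∑ i : Fin 4, ∑ j : Fin 4,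
            if i < j then C (b i j) * (X i ^ 2 * X j + X i * X j ^ 2) else 0)
            = C (b 0 1) * (X 0 ^ 2 * X 1 + X 0 * X 1 ^ 2)
            + C (b 0 2) * (X 0 ^ 2 * X 2 + X 0 * X 2 ^ 2)
            + C (b 0 3) * (X 0 ^ 2 * X 3 + X 0 * X 3 ^ 2)
            + C (b 1 2) * (X 1 ^ 2 * X 2 + X 1 * X 2 ^ 2)
            + C (b 1 3) * (X 1 ^ 2 * X 3 + X 1 * X 3 ^ 2)
            + C (b 2 3) * (X 2 ^ 2 * X 3 + X 2 * X 3 ^ 2) := by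
          simp [Fin.sum_univ_four]
          ring
        rw [hψ]
        simp only
        rw [← hexp, ← hb]
        ring
      · rintro ⟨⟨b1, b2, b3, b4, b5, b6⟩, rfl⟩
        constructor
        · rw [hψ]
          refine hfh.sub ?_
          repeat' apply IsHomogeneous.add
          all_goals exact homog_g _ _ _
        · intro x hx
          rw [bwd (ψ (b1, b2, b3, b4, b5, b6)) ?_ x]
          refine ⟨![![0, b1, b2, b3], ![0, 0, b4, b5], ![0, 0, 0, b6], ![0, 0, 0, 0]], ?_⟩
          have : f - ψ (b1, b2, b3, b4, b5, b6)
              = C b1 * (X 0 ^ 2 * X 1 + X 0 * X 1 ^ 2)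
              + C b2 * (X 0 ^ 2 * X 2 + X 0 * X 2 ^ 2)
              + C b3 * (X 0 ^ 2 * X 3 + X 0 * X 3 ^ 2)
              + C b4 * (X 1 ^ 2 * X 2 + X 1 * X 2 ^ 2)
              + C b5 * (X 1 ^ 2 * X 3 + X 1 * X 3 ^ 2)
              + C b6 * (X 2 ^ 2 * X 3 + X 2 * X 3 ^ 2) := by
            rw [hψ]; ring
          rw [this]
          simp [Fin.sum_univ_four]
          ring
    rw [hset]
    have hinj : Function.Injective ψ := by
      intro u v huv
      rw [hψ] at huv
      simp only at huv
      have hAB := sub_right_injective huv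
      obtain ⟨u1, u2, u3, u4, u5, u6⟩ := u
      obtain ⟨v1, v2, v3, v4, v5, v6⟩ := v
      have c1 := congrArg (coeff (single 0 2 + single 1 1)) hAB
      have c2 := congrArg (coeff (single 0 2 + single 2 1)) hAB
      have c3 := congrArg (coeff (single 0 2 + single 3 1)) hAB
      have c4 := congrArg (coeff (single 1 2 + single 2 1)) hAB
      have c5 := congrArg (coeff (single 1 2 + single 3 1)) hAB
      have c6 := congrArg (coeff (single 2 2 + single 3 1)) hAB
      simp only [X, monomial_pow, monomial_mul, mul_add, coeff_add, coeff_C_mul, coeff_monomial,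
        one_pow, one_mul, mul_one, Finsupp.smul_single, smul_eq_mul, Nat.mul_one] at c1 c2 c3 c4 c5 c6
      simp [fseq, Finsupp.single_apply] at c1 c2 c3 c4 c5 c6
      simp [c1, c2, c3, c4, c5, c6]
    rw [← Set.image_univ, Set.ncard_image_of_injective _ hinj, Set.ncard_univ]
    simp only [Nat.card_prod, hK]
end
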